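/- arXiv:1807.03951 — 7 statements merged into one kernel-verified Lean document; each statement's English description precedes it below -/
import Mathlib

section
/- Let $n \geq 1$ and $1 \leq x$, $x+1 < y \leq n$. Let $A^c_{x,y} = \{ w \in S_n \mid w(x) < w(y) \}$. Then the map $f'_{xy} : A^c_{x,y} \to A^c_{x+1,y}$ defined by $f'_{xy}(w) = w$ if $w(x+1) < w(y)$, and $f'_{xy}(w) = w \cdot s_x$ if $w(x+1) > w(y)$, is a well-defined bijection onto $A^c_{x+1,y} = \{ w \in S_n \mid w(x+1) < w(y) \}$. -/
/-!
The inverse of `w ↦ if w(x+1) < w(y) then w else w·s_x` is the same construction with the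
roles of `x` and `x+1` exchanged: both maps fix `y`, and when the first one applies `s_x` the
permutation it produces fails the test of the second one, which therefore applies `s_x` again.
-/

open Equiv

variable {ι : Type*} [LinearOrder ι]

def swapUnlessLt (a b c : ι) (w : Perm ι) : Perm ι :=
  if w b < w c then w else w * swap a b

variable {a b c : ι}

theorem mapsTo_swapUnlessLt (hca : c ≠ a) (hcb : c ≠ b) :
    Set.MapsTo (swapUnlessLt a b c) {w | w a < w c} {w | w b < w c} := by
  intro w (hw : w a < w c)
  by_cases h : w b < w c
  · simp [swapUnlessLt, h]
  · simp [swapUnlessLt, h, swap_apply_of_ne_of_ne hca hcb, hw]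

theorem leftInvOn_swapUnlessLt (hca : c ≠ a) (hcb : c ≠ b) :
    Set.LeftInvOn (swapUnlessLt b a c) (swapUnlessLt a b c) {w | w a < w c} := by
  intro w (hw : w a < w c)
  by_cases h : w b < w c
  · simp [swapUnlessLt, h, hw]
  · have hfail : ¬(w * swap a b) a < (w * swap a b) c := by
      simpa [swap_apply_of_ne_of_ne hca hcb] using h
    have hswap : swapUnlessLt a b c w = w * swap a b := if_neg h
    rw [hswap, swapUnlessLt, if_neg hfail, swap_comm b a, mul_assoc,
      swap_mul_self, mul_one]

theorem bijOn_swapUnlessLt (hca : c ≠ a) (hcb : c ≠ b) :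
    Set.BijOn (swapUnlessLt a b c) {w | w a < w c} {w | w b < w c} :=
  Set.InvOn.bijOn ⟨leftInvOn_swapUnlessLt hca hcb, leftInvOn_swapUnlessLt hcb hca⟩
    (mapsTo_swapUnlessLt hca hcb) (mapsTo_swapUnlessLt hcb hca)

/-- For positions `x`, `x1 = x+1`, `y` with `x+1 < y` in `Fin n`,
the map `f'_{xy}` sending `w ↦ w` if `w(x+1) < w(y)` and `w ↦ w·s_x` if
`w(x+1) > w(y)` is a well-defined bijection from
`Aᶜ_{x,y} = {w | w(x) < w(y)}` onto `Aᶜ_{x+1,y} = {w | w(x+1) < w(y)}`. -/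
theorem stmt1 (n : ℕ) (x x1 y : Fin n) (hx1 : (x1 : ℕ) = (x : ℕ) + 1)
    (hxy : x1 < y) :
    Set.BijOn (fun w : Equiv.Perm (Fin n) =>
      if w x1 < w y then w else w * Equiv.swap x x1)
      {w : Equiv.Perm (Fin n) | w x < w y}
      {w : Equiv.Perm (Fin n) | w x1 < w y} := by
  have hyx : y ≠ x := fun h => by rw [h] at hxy; exact absurd hxy (by omega)
  exact bijOn_swapUnlessLt hyx hxy.ne'
end

section
/- Let $w \in S_n$ and let $x$ with $1 \leq x < n$ satisfy $|w(x) - w(x+1)| \geq 2$. Then the descent set of $(w s_x)^{-1}$ equals the descent set of $w^{-1}$; that is, for every $i \in \{1,\dots,n-1\}$, $w^{-1}(i) > w^{-1}(i+1)$ if and only if $(w s_x)^{-1}(i) > (w s_x)^{-1}(i+1)$. -/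
/-!
Multiplying `w` on the right by `s_x` swaps the positions `x, x + 1`, so
`(w s_x)⁻¹ = s_x w⁻¹` and the descents of `(w s_x)⁻¹` compare `s_x w⁻¹(i)` with `s_x w⁻¹(i + 1)`.
Since `x, x + 1` are consecutive, applying `s_x` preserves the order of every pair except
`{x, x + 1}` itself, and the gap `|w(x) - w(x + 1)| ≥ 2` says that `w⁻¹` never sends two
consecutive values onto that pair.
-/

section CovBy

variable {α : Type*} [LinearOrder α] {x y z : α}

theorem CovBy.lt_left_iff_lt_right (h : x ⋖ y) (hz : z ≠ x) : z < x ↔ z < y :=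
  ⟨fun hzx => hzx.trans h.lt, fun hzy => (h.le_of_lt hzy).lt_of_ne hz⟩

theorem CovBy.left_lt_iff_right_lt (h : x ⋖ y) (hz : z ≠ y) : x < z ↔ y < z :=
  ⟨fun hxz => (h.ge_of_gt hxz).lt_of_ne' hz, fun hyz => h.lt.trans hyz⟩

theorem Equiv.swap_apply_lt_swap_apply_iff_of_covBy [DecidableEq α] {a b : α} (h : x ⋖ y)
    (hxy : ¬(a = x ∧ b = y)) (hyx : ¬(a = y ∧ b = x)) :
    swap x y a < swap x y b ↔ a < b := by
  by_cases hax : a = x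
  · subst hax
    rw [swap_apply_left]
    by_cases hbx : b = a
    · subst hbx; simp
    have hby : b ≠ y := fun hby => hxy ⟨rfl, hby⟩
    rw [swap_apply_of_ne_of_ne hbx hby]
    exact (h.left_lt_iff_right_lt hby).symm
  by_cases hay : a = y
  · subst hay
    rw [swap_apply_right]
    by_cases hby : b = a
    · subst hby; simp
    have hbx : b ≠ x := fun hbx => hyx ⟨rfl, hbx⟩
    rw [swap_apply_of_ne_of_ne hbx hby]
    exact h.left_lt_iff_right_lt hby
  rw [swap_apply_of_ne_of_ne hax hay]
  by_cases hbx : b = x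
  · subst hbx
    rw [swap_apply_left]
    exact (h.lt_left_iff_lt_right hax).symm
  by_cases hby : b = y
  · subst hby
    rw [swap_apply_right]
    exact h.lt_left_iff_lt_right hax
  rw [swap_apply_of_ne_of_ne hbx hby]

end CovBy

/-- If `|w(x) - w(x+1)| ≥ 2` then `w·s_x` and `w` have inverses
with the same descent set: for every adjacent pair of values `i, i+1`,
`w⁻¹(i) > w⁻¹(i+1)` iff `(w s_x)⁻¹(i) > (w s_x)⁻¹(i+1)`. -/
theorem stmt3 (n : ℕ) (w : Equiv.Perm (Fin n)) (x x1 : Fin n)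
    (hx1 : (x1 : ℕ) = (x : ℕ) + 1)
    (hgap : ((w x : ℕ) + 2 ≤ (w x1 : ℕ)) ∨ ((w x1 : ℕ) + 2 ≤ (w x : ℕ))) :
    ∀ i i1 : Fin n, (i1 : ℕ) = (i : ℕ) + 1 →
      (w⁻¹ i1 < w⁻¹ i ↔ (w * Equiv.swap x x1)⁻¹ i1 < (w * Equiv.swap x x1)⁻¹ i) := by
  intro i i1 hi
  have hcov : x ⋖ x1 := Fin.covBy_iff.2 (Nat.covBy_iff_add_one_eq.2 hx1.symm)
  have hxx1 : ¬(w⁻¹ i1 = x ∧ w⁻¹ i = x1) := by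
    rintro ⟨h1, h⟩
    rw [Equiv.Perm.inv_eq_iff_eq] at h1 h
    omega
  have hx1x : ¬(w⁻¹ i1 = x1 ∧ w⁻¹ i = x) := by
    rintro ⟨h1, h⟩
    rw [Equiv.Perm.inv_eq_iff_eq] at h1 h
    omega
  rw [mul_inv_rev, Equiv.swap_inv, Equiv.Perm.mul_apply, Equiv.Perm.mul_apply,
    Equiv.swap_apply_lt_swap_apply_iff_of_covBy hcov hxx1 hx1x]
end

section
/- Let $M = (m_{ij})$ be an $n \times n$ matrix of natural numbers with $m_{ij} = 0$ unless $i < j$. Fix $x, y$ with $x + 1 < y \leq n$, and suppose $m_{x,x+1} = 0$, $m_{x,r} = m_{x+1,r}$ for all $r > x+1$ with $r \neq y$, and $m_{s,x} = m_{s,x+1}$ for all $s < x$. Then for every $w \in S_n$ such that exactly one of $(x,y), (x+1,y)$ lies in $\mathrm{Inv}(w)$, we have $\sum_{(i,j) \neq (x,y), (x+1,y)} m_{ij} \chi((i,j) \in \mathrm{Inv}(w s_x)) = \sum_{(i,j) \neq (x,y), (x+1,y)} m_{ij} \chi((i,j) \in \mathrm{Inv}(w))$, where the sums run over $1 \leq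 i < j \leq n$; that is, the weighted inversion numbers $\mathrm{inv}(v, M) = \sum_{1 \leq i < j \leq n} m_{ij} \cdot \chi((i,j) \in \mathrm{Inv}(v))$ of $w s_x$ and $w$ agree once the contributions of positions $(x,y)$ and $(x+1,y)$ are removed. -/
/-- Let `M` be an upper-triangular `n × n` matrix of naturals with
`m_{x,x+1} = 0`, `m_{x,r} = m_{x+1,r}` for all `r > x+1`, `r ≠ y`, and
`m_{s,x} = m_{s,x+1}` for all `s < x`.  If exactly one of `(x,y)`, `(x+1,y)`
lies in `Inv(w)`, then the weighted inversion numbers of `w·s_x` and `w`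
agree after removing the contributions of the pairs `(x,y)` and `(x+1,y)`. -/
theorem stmt5 (n : ℕ) (M : Fin n → Fin n → ℕ) (x x1 y : Fin n)
    (hx1 : (x1 : ℕ) = (x : ℕ) + 1) (hxy : x1 < y)
    (htri : ∀ i j : Fin n, ¬ i < j → M i j = 0)
    (h0 : M x x1 = 0)
    (hrow : ∀ r : Fin n, x1 < r → r ≠ y → M x r = M x1 r)
    (hcol : ∀ s : Fin n, s < x → M s x = M s x1)
    (w : Equiv.Perm (Fin n))
    (hone : Xor' (w y < w x) (w y < w x1)) :
    (∑ p : Fin n × Fin n,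
        if p ≠ (x, y) ∧ p ≠ (x1, y) ∧ (w * Equiv.swap x x1) p.2 < (w * Equiv.swap x x1) p.1
        then M p.1 p.2 else 0)
    = (∑ p : Fin n × Fin n,
        if p ≠ (x, y) ∧ p ≠ (x1, y) ∧ w p.2 < w p.1
        then M p.1 p.2 else 0) := by
  set σ := Equiv.swap x x1 with hσ
  have hxy' : (x1 : ℕ) < (y : ℕ) := hxy
  have hyx : y ≠ x := by
    intro h; have : (y : ℕ) = (x : ℕ) := congrArg Fin.val h; omega
  have hyx1 : y ≠ x1 := by
    intro h; have : (y : ℕ) = (x1 : ℕ) := congrArg Fin.val h; omega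
  have hσx : σ x = x1 := Equiv.swap_apply_left x x1
  have hσx1 : σ x1 = x := Equiv.swap_apply_right x x1
  have hσy : σ y = y := Equiv.swap_apply_of_ne_of_ne hyx hyx1
  have hMeq : ∀ a b : Fin n, (a, b) ≠ (x, y) → (a, b) ≠ (x1, y) →
      M (σ a) (σ b) = M a b := by
    intro a b h1 h2
    rcases eq_or_ne a x with ha | hax
    · have hby : b ≠ y := fun hb => h1 (by rw [ha, hb])
      rcases eq_or_ne b x with hb | hbx
      · rw [ha, hb, hσx, htri x1 x1 (lt_irrefl x1), htri x x (lt_irrefl x)]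
      rcases eq_or_ne b x1 with hb | hbx1
      · rw [ha, hb, hσx, hσx1, h0, htri x1 x (by rw [Fin.lt_def]; omega)]
      · rw [ha, hσx, Equiv.swap_apply_of_ne_of_ne hbx hbx1]
        have hbx' : (b : ℕ) ≠ (x : ℕ) := fun h => hbx (Fin.ext h)
        have hbx1' : (b : ℕ) ≠ (x1 : ℕ) := fun h => hbx1 (Fin.ext h)
        rcases lt_or_ge (x1 : ℕ) (b : ℕ) with hlt | hle
        · exact (hrow b hlt hby).symm
        · rw [htri x b (by rw [Fin.lt_def]; omega),
            htri x1 b (by rw [Fin.lt_def]; omega)]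
    rcases eq_or_ne a x1 with ha | hax1
    · have hby : b ≠ y := fun hb => h2 (by rw [ha, hb])
      rcases eq_or_ne b x with hb | hbx
      · rw [ha, hb, hσx1, hσx, h0, htri x1 x (by rw [Fin.lt_def]; omega)]
      rcases eq_or_ne b x1 with hb | hbx1
      · rw [ha, hb, hσx1, htri x x (lt_irrefl x), htri x1 x1 (lt_irrefl x1)]
      · rw [ha, hσx1, Equiv.swap_apply_of_ne_of_ne hbx hbx1]
        have hbx' : (b : ℕ) ≠ (x : ℕ) := fun h => hbx (Fin.ext h)
        have hbx1' : (b : ℕ) ≠ (x1 : ℕ) := fun h => hbx1 (Fin.ext h)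
        rcases lt_or_ge (x1 : ℕ) (b : ℕ) with hlt | hle
        · exact hrow b hlt hby
        · rw [htri x1 b (by rw [Fin.lt_def]; omega),
            htri x b (by rw [Fin.lt_def]; omega)]
    · have hax' : (a : ℕ) ≠ (x : ℕ) := fun h => hax (Fin.ext h)
      have hax1' : (a : ℕ) ≠ (x1 : ℕ) := fun h => hax1 (Fin.ext h)
      rw [Equiv.swap_apply_of_ne_of_ne hax hax1]
      rcases eq_or_ne b x with hb | hbx
      · rw [hb, hσx]
        rcases lt_or_ge (a : ℕ) (x : ℕ) with hlt | hle
        · exact (hcol a hlt).symm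
        · rw [htri a x (by rw [Fin.lt_def]; omega),
            htri a x1 (by rw [Fin.lt_def]; omega)]
      rcases eq_or_ne b x1 with hb | hbx1
      · rw [hb, hσx1]
        rcases lt_or_ge (a : ℕ) (x : ℕ) with hlt | hle
        · exact hcol a hlt
        · rw [htri a x1 (by rw [Fin.lt_def]; omega),
            htri a x (by rw [Fin.lt_def]; omega)]
      · rw [Equiv.swap_apply_of_ne_of_ne hbx hbx1]
  refine Fintype.sum_equiv (Equiv.prodCongr σ σ) _ _ ?_
  rintro ⟨a, b⟩
  simp only [Equiv.prodCongr_apply, Prod.map]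
  have hne : ∀ c : Fin n, ((σ a, σ b) = (c, y)) ↔ ((a, b) = (σ c, y)) := by
    intro c
    simp only [Prod.mk.injEq]
    constructor
    · rintro ⟨p1, p2⟩
      refine ⟨?_, ?_⟩
      · have := congrArg σ p1; rwa [Equiv.swap_apply_self] at this
      · have := congrArg σ p2; rwa [Equiv.swap_apply_self, hσy] at this
    · rintro ⟨p1, p2⟩
      exact ⟨by rw [p1, Equiv.swap_apply_self], by rw [p2, hσy]⟩
  have e1 : ((σ a, σ b) = (x, y)) ↔ ((a, b) = (x1, y)) := by rw [hne x, hσx]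
  have e2 : ((σ a, σ b) = (x1, y)) ↔ ((a, b) = (x, y)) := by rw [hne x1, hσx1]
  have hcond : ((σ a, σ b) ≠ (x, y) ∧ (σ a, σ b) ≠ (x1, y) ∧ w (σ b) < w (σ a)) ↔
      ((a, b) ≠ (x, y) ∧ (a, b) ≠ (x1, y) ∧ (w * σ) b < (w * σ) a) := by
    simp only [Ne, e1, e2, Equiv.Perm.mul_apply]
    tauto
  by_cases h : (a, b) ≠ (x, y) ∧ (a, b) ≠ (x1, y) ∧ (w * σ) b < (w * σ) a
  · rw [if_pos h, if_pos (hcond.mpr h)]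
    exact (hMeq a b h.1 h.2.1).symm
  · rw [if_neg h, if_neg (fun hh => h (hcond.mp hh))]
end

section
/- Let $m \geq 1$, $n = 2m$, and $0 \leq \ell \leq m$. Consider the $m$-tuple of dominoes $\boldsymbol{\eta}_a = (\eta_{a_1}, \dots, \eta_{a_m})$ with $a = (0^{m-\ell}, 1^\ell)$, where $\eta_0$ is a horizontal domino and $\eta_1$ a vertical domino, each with content set $\{0, 1\}$. Then every standard filling $\mathbf{T}$ of $\boldsymbol{\eta}_a$ with entries $1, \dots, n$ has at least $M = \sum_{i=1}^{\ell} (m - i)$ inversions, where an inversion is a pair of cells $(x, y)$ with shifted contents satisfying $0 < \tilde{c}(y) - \tilde{c}(x) < m$ and entry of $x$ greater than entry of $y$. -/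
/-- The shifted content of the cell of content `c ∈ {0,1}` in the `i`-th domino
of an `m`-tuple of dominoes: `c̃ = m·c + i`. -/
def dshift (m : ℕ) (x : Fin m × Fin 2) : ℕ := m * (x.2 : ℕ) + (x.1 : ℕ)

/-- Number of inversions of a filling `T` of an `m`-tuple of dominoes:
pairs of cells `(x,y)` with `0 < c̃(y) - c̃(x) < m` and `T(x) > T(y)`. -/
def dinv (m : ℕ) (T : (Fin m × Fin 2) ≃ Fin (2 * m)) : ℕ :=
  (Finset.univ.filter (fun p : (Fin m × Fin 2) × (Fin m × Fin 2) =>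
    dshift m p.1 < dshift m p.2 ∧ dshift m p.2 < dshift m p.1 + m ∧
      T p.2 < T p.1)).card

/-- A filling of `η_a` with `a = (0^{m-l}, 1^l)` is standard when each domino
is increasing along its row / up its column: for a horizontal domino
(`i < m - l`) the content-0 (left) entry is smaller, and for a vertical domino
(`i ≥ m - l`) the bottom entry is smaller, i.e. its content-0 (top) entry is
larger. -/
def dstd (m l : ℕ) (T : (Fin m × Fin 2) ≃ Fin (2 * m)) : Prop :=
  ∀ i : Fin m, if (i : ℕ) < m - l then T (i, 0) < T (i, 1) else T (i, 1) < T (i, 0)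

/-!
Each vertical domino `i` (those with `m - l ≤ i`) produces, together with every domino `j < i`,
an inversion between the content-1 cell of `j` and one of the two cells of `i`: either
`T(j,1) > T(i,1)`, or else `T(j,1) < T(i,1) < T(i,0)` and the content-0 cell of `i` beats
`(j,1)`; the shifted contents of these pairs differ by `i - j` and `m + j - i`, both in `(0, m)`.
These inversions are distinct for distinct pairs `(i, j)`, and vertical domino `i` has `i`
partners, so there are at least `∑_{m - l ≤ i < m} i = ∑_{k < l} (m - (k + 1))`.
-/

open Finset

namespace Domino

variable {m l : ℕ}

def inversions (m : ℕ) (T : (Fin m × Fin 2) ≃ Fin (2 * m)) :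
    Finset ((Fin m × Fin 2) × (Fin m × Fin 2)) :=
  univ.filter fun p => dshift m p.1 < dshift m p.2 ∧ dshift m p.2 < dshift m p.1 + m ∧
    T p.2 < T p.1

theorem mem_inversions {T : (Fin m × Fin 2) ≃ Fin (2 * m)} {p : (Fin m × Fin 2) × (Fin m × Fin 2)} :
    p ∈ inversions m T ↔
      dshift m p.1 < dshift m p.2 ∧ dshift m p.2 < dshift m p.1 + m ∧ T p.2 < T p.1 := by
  rw [inversions, mem_filter]
  exact and_iff_right (mem_univ p)

theorem dinv_eq_card_inversions (T : (Fin m × Fin 2) ≃ Fin (2 * m)) :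
    dinv m T = #(inversions m T) := rfl

def crossInversion (T : (Fin m × Fin 2) ≃ Fin (2 * m)) (i j : Fin m) :
    (Fin m × Fin 2) × (Fin m × Fin 2) :=
  if T (i, 1) < T (j, 1) then ((j, 1), (i, 1)) else ((i, 0), (j, 1))

theorem crossInversion_mem_inversions (T : (Fin m × Fin 2) ≃ Fin (2 * m)) {i j : Fin m}
    (hji : j < i) (hi : T (i, 1) < T (i, 0)) : crossInversion T i j ∈ inversions m T := by
  have hji' : (j : ℕ) < i := hji
  have hne : T (i, 1) ≠ T (j, 1) := fun h => hji.ne' (Prod.ext_iff.1 (T.injective h)).1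
  unfold crossInversion
  split_ifs with h <;> simp only [mem_inversions, dshift]
  · refine ⟨?_, ?_, h⟩ <;> simp <;> omega
  · refine ⟨?_, ?_, (lt_of_le_of_ne (not_lt.1 h) hne.symm).trans hi⟩ <;> simp <;> omega

theorem crossInversion_injective (T : (Fin m × Fin 2) ≃ Fin (2 * m)) {i j i' j' : Fin m}
    (h : crossInversion T i j = crossInversion T i' j') : i = i' ∧ j = j' := by
  unfold crossInversion at h
  split_ifs at h <;> simp_all

theorem sum_val_filter_sub_le (hl : l ≤ m) :
    ∑ i ∈ univ.filter (fun i : Fin m => m - l ≤ (i : ℕ)), (i : ℕ) =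
      ∑ k ∈ range l, (m - (k + 1)) := by
  refine sum_bij' (fun i _ => m - 1 - i) (fun k hk => ⟨m - 1 - k, by grind⟩) ?_ ?_ ?_ ?_ ?_
  · intro i hi
    have := (mem_filter.1 hi).2
    have := i.isLt
    rw [mem_range]; omega
  · intro k hk
    have := mem_range.1 hk
    rw [mem_filter]; exact ⟨mem_univ _, by simp only; omega⟩
  · intro i _
    ext; simp only; omega
  · intro k hk
    have := mem_range.1 hk
    simp only; omega
  · intro i _
    have := i.isLt
    omega

end Domino

open Domino in
theorem stmt11_general (m l : ℕ) (hl : l ≤ m)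
    (T : (Fin m × Fin 2) ≃ Fin (2 * m)) (hT : dstd m l T) :
    (∑ i ∈ Finset.range l, (m - (i + 1))) ≤ dinv m T := by
  set vertical := univ.filter fun i : Fin m => m - l ≤ (i : ℕ)
  have hvertical : ∀ i ∈ vertical, T (i, 1) < T (i, 0) := fun i hi => by
    simpa [if_neg (not_lt.2 (mem_filter.1 hi).2)] using hT i
  calc ∑ k ∈ range l, (m - (k + 1))
      = #(vertical.sigma fun i => Iio i) := by
        rw [card_sigma, ← sum_val_filter_sub_le hl]
        simp only [Fin.card_Iio, vertical]
    _ ≤ #(inversions m T) := by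
        refine card_le_card_of_injOn (fun q => crossInversion T q.1 q.2) ?_ ?_
        · rintro ⟨i, j⟩ hq
          obtain ⟨hi, hj⟩ := mem_sigma.1 hq
          exact crossInversion_mem_inversions T (mem_Iio.1 hj) (hvertical i hi)
        · rintro ⟨i, j⟩ - ⟨i', j'⟩ - h
          obtain ⟨rfl, rfl⟩ := crossInversion_injective T h
          rfl
    _ = dinv m T := (dinv_eq_card_inversions T).symm

/-- every standard filling of the tuple of `m - l` horizontal and
`l` vertical dominoes (each with content set `{0,1}`) has at least
`M = ∑_{i=1}^{l} (m - i)` inversions. -/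
theorem stmt11 (m l : ℕ) (hm : 1 ≤ m) (hl : l ≤ m)
    (T : (Fin m × Fin 2) ≃ Fin (2 * m)) (hT : dstd m l T) :
    (∑ i ∈ Finset.range l, (m - (i + 1))) ≤ dinv m T :=
  stmt11_general m l hl T hT
end

section
/- With the setup of the previous statement ($n = 2m$, $a = (0^{m-\ell}, 1^\ell)$), there exists a standard filling $\mathbf{T}$ of $\boldsymbol{\eta}_a$ with exactly $M = \sum_{i=1}^{\ell}(m - i)$ inversions; namely the filling in which, for $0 \leq \alpha \leq m - \ell - 1$, the numbers $\alpha + 1$ and $m + \ell + \alpha + 1$ appear in the $\alpha$-th (horizontal) domino, and for $m - \ell \leq \alpha \leq m - 1$, the numbers $\alpha + 1$ and $\alpha + \ell + 1$ appear in the $\alpha$-th (vertical) domino. -/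
/-!
In this filling the content-0 cells carry `0, …, m - l - 1, m, …, m + l - 1` and the content-1
cells carry `m + l, …, 2m - 1, m - l, …, m - 1`, both read by domino index. Hence every
inversion `(x, y)` has `y` the top cell of a vertical domino `m - l + k`, and `x` is either the
right cell of one of the `m - l` horizontal dominoes or the bottom cell of one of the `l - 1 - k`
later vertical dominoes: that domino accounts for `m - (k + 1)` inversions.
-/

open Finset

lemma dinv_eq_sum_card {m : ℕ} (T : (Fin m × Fin 2) ≃ Fin (2 * m)) :
    dinv m T = ∑ y, #{x | dshift m x < dshift m y ∧ dshift m y < dshift m x + m ∧ T y < T x} := by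
  simp only [dinv, card_filter, Fintype.sum_prod_type_right]

lemma sum_range_ite_le {M : Type*} [AddCommMonoid M] (f : ℕ → M) (h l : ℕ) :
    ∑ j ∈ range (h + l), (if h ≤ j then f j else 0) = ∑ k ∈ range l, f (h + k) := by
  rw [sum_range_add, sum_congr rfl fun j hj => if_neg (by simpa using hj), sum_const_zero,
    zero_add]
  simp

section DominoFilling

variable {m l : ℕ}

def dominoEntry (hl : l ≤ m) (x : Fin m × Fin 2) : Fin (2 * m) :=
  ⟨if x.2 = 0 then (if (x.1 : ℕ) < m - l then (x.1 : ℕ) else x.1 + l)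
    else (if (x.1 : ℕ) < m - l then m + l + x.1 else x.1),
   by split_ifs <;> omega⟩

lemma dominoEntry_injective (hl : l ≤ m) : Function.Injective (dominoEntry hl) := by
  rintro ⟨i, c⟩ ⟨j, d⟩ h
  simp only [dominoEntry, Fin.mk.injEq] at h
  fin_cases c <;> fin_cases d <;> simp at h ⊢ <;> split_ifs at h <;> omega

noncomputable def dominoFilling (hl : l ≤ m) : (Fin m × Fin 2) ≃ Fin (2 * m) :=
  Equiv.ofBijective (dominoEntry hl) <| (Fintype.bijective_iff_injective_and_card _).2
    ⟨dominoEntry_injective hl, by simp [mul_comm]⟩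

lemma dominoFilling_apply_zero (hl : l ≤ m) (i : Fin m) :
    (dominoFilling hl (i, 0) : ℕ) = if (i : ℕ) < m - l then (i : ℕ) else i + l := rfl

lemma dominoFilling_apply_one (hl : l ≤ m) (i : Fin m) :
    (dominoFilling hl (i, 1) : ℕ) = if (i : ℕ) < m - l then m + l + i else i := rfl

lemma dstd_dominoFilling (hl : l ≤ m) : dstd m l (dominoFilling hl) := by
  intro i
  simp only [Fin.lt_def, dominoFilling_apply_zero, dominoFilling_apply_one]
  split_ifs <;> omega

lemma dominoFilling_inversion_iff (hl : l ≤ m) (x y : Fin m × Fin 2) :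
    (dshift m x < dshift m y ∧ dshift m y < dshift m x + m ∧
        dominoFilling hl y < dominoFilling hl x) ↔
      y.2 = 1 ∧ m - l ≤ y.1 ∧ (x.2 = 1 ∧ x.1 < m - l ∨ x.2 = 0 ∧ y.1 < x.1) := by
  obtain ⟨i, c⟩ := x
  obtain ⟨j, d⟩ := y
  fin_cases c <;> fin_cases d <;>
    simp [dshift, Fin.lt_def, dominoFilling_apply_zero, dominoFilling_apply_one,
      -Fin.val_fin_lt] <;>
    split_ifs <;> omega

lemma card_dominoFilling_inversions (hl : l ≤ m) (y : Fin m × Fin 2) :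
    #{x | dshift m x < dshift m y ∧ dshift m y < dshift m x + m ∧
        dominoFilling hl y < dominoFilling hl x} =
      if y.2 = 1 ∧ m - l ≤ y.1 then (m - l) + (m - 1 - y.1) else 0 := by
  simp only [dominoFilling_inversion_iff]
  split_ifs with hy
  · rw [card_filter, Fintype.sum_prod_type_right, Fin.sum_univ_two, ← card_filter, ← card_filter]
    simp [hy, Fin.card_filter_val_lt, filter_lt_eq_Ioi, add_comm]
  · rw [filter_false_of_mem fun x _ h => hy ⟨h.1, h.2.1⟩, card_empty]

lemma dinv_dominoFilling (hl : l ≤ m) :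
    dinv m (dominoFilling hl) = ∑ i ∈ range l, (m - (i + 1)) := by
  rw [dinv_eq_sum_card, Fintype.sum_prod_type]
  simp only [card_dominoFilling_inversions, Fin.sum_univ_two, zero_ne_one, false_and, if_false,
    true_and, zero_add]
  rw [Fin.sum_univ_eq_sum_range (fun j => if m - l ≤ j then m - l + (m - 1 - j) else 0)]
  obtain ⟨h, rfl⟩ : ∃ h, m = h + l := ⟨m - l, by omega⟩
  rw [Nat.add_sub_cancel, sum_range_ite_le]
  exact sum_congr rfl fun k hk => by simp at hk; omega

end DominoFilling

theorem stmt12_general (m l : ℕ) (hl : l ≤ m) :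
    ∃ T : (Fin m × Fin 2) ≃ Fin (2 * m), dstd m l T ∧
      (∀ α : Fin m, (α : ℕ) < m - l →
        ({((T (α, 0)) : ℕ), ((T (α, 1)) : ℕ)} : Finset ℕ)
          = {(α : ℕ), m + l + (α : ℕ)}) ∧
      (∀ α : Fin m, m - l ≤ (α : ℕ) →
        ({((T (α, 0)) : ℕ), ((T (α, 1)) : ℕ)} : Finset ℕ)
          = {(α : ℕ), (α : ℕ) + l}) ∧
      dinv m T = ∑ i ∈ Finset.range l, (m - (i + 1)) := by
  refine ⟨dominoFilling hl, dstd_dominoFilling hl, fun α hα => ?_, fun α hα => ?_,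
    dinv_dominoFilling hl⟩
  · rw [dominoFilling_apply_zero, dominoFilling_apply_one, if_pos hα, if_pos hα]
  · rw [dominoFilling_apply_zero, dominoFilling_apply_one, if_neg (not_lt.2 hα),
      if_neg (not_lt.2 hα), pair_comm]

/-- there is a standard filling of the tuple of `m - l` horizontal
and `l` vertical dominoes attaining exactly `M = ∑_{i=1}^{l}(m-i)` inversions,
namely the one in which the `α`-th horizontal domino (`0 ≤ α ≤ m-l-1`) holds the
numbers `α+1` and `m+l+α+1`, and the `α`-th vertical domino
(`m-l ≤ α ≤ m-1`) holds `α+1` and `α+l+1` (entries written `1,…,2m`;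
zero-indexed below). -/
theorem stmt12 (m l : ℕ) (hm : 1 ≤ m) (hl : l ≤ m) :
    ∃ T : (Fin m × Fin 2) ≃ Fin (2 * m), dstd m l T ∧
      (∀ α : Fin m, (α : ℕ) < m - l →
        ({((T (α, 0)) : ℕ), ((T (α, 1)) : ℕ)} : Finset ℕ)
          = {(α : ℕ), m + l + (α : ℕ)}) ∧
      (∀ α : Fin m, m - l ≤ (α : ℕ) →
        ({((T (α, 0)) : ℕ), ((T (α, 1)) : ℕ)} : Finset ℕ)
          = {(α : ℕ), (α : ℕ) + l}) ∧
      dinv m T = ∑ i ∈ Finset.range l, (m - (i + 1)) :=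
  stmt12_general m l hl
end

section
/- Let $n \geq 2$ and let $\boldsymbol{\lambda}$ be an $n$-tuple of single cells with contents in $\{0,1\}$ such that the cells indexed $i$ and $i+1$ have contents $\epsilon$ and $1-\epsilon$ respectively, for some $\epsilon \in \{0,1\}$ and some $0 \leq i \leq n-2$. Let $\boldsymbol{\mu}_0$ (resp. $\boldsymbol{\mu}_1$) be the $(n-1)$-tuple obtained by replacing these two cells by a single horizontal (resp. vertical) domino with content set $\{0,1\}$ at position $i$. Then the standard-filling generating functions satisfy $\sum_{\mathbf{T} \in \mathrm{SYT}(\boldsymbol{\lambda})} q^{\mathrm{inv}(\mathbf{T})} t_{\mathrm{Des}(\mathbf{T})} = \sum_{\mathbf{T} \in \mathrm{SYT}(\boldsymbol{\mu}_0)} q^{\mathrm{inv}(\mathbf{T})} t_{\mathrm{Des}(\mathbf{T})} + q^{\epsilon} \sum_{\mathbf{T} \in \mathrm{SYT}(\boldsymbol{\mu}_1)} q^{\mathrm{inv}(\mathbf{T})} t_{\mathrm{Des}(\mathbf{T})}$, as elements of the free $\mathbb{Z}[q]$-module on formal symbols $t_D$, $D \subseteq \{1, \dots, n-1\}$. -/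
/-- One-indexed position of the cell `x` in the content reading word determined
by the (injective) shifted-content function `sh`. -/
def wpos {N : ℕ} (sh : Fin N → ℕ) (x : Fin N) : ℕ :=
  (Finset.univ.filter (fun y => sh y < sh x)).card + 1

/-- Position in the content reading word of the cell carrying the entry `k`
(zero-indexed entries; identity outside range). -/
def wepos {N : ℕ} (sh : Fin N → ℕ) (T : Equiv.Perm (Fin N)) (k : ℕ) : ℕ :=
  if h : k < N then wpos sh (T⁻¹ ⟨k, h⟩) else k

/-- Descent set of the content reading word of the filling `T`:
`k ∈ {1,…,N-1}` is a descent when the entry `k+1` appears before the entry `k`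
in the reading word (zero-indexed entries below: entry `k` before entry `k-1`). -/
def wdes {N : ℕ} (sh : Fin N → ℕ) (T : Equiv.Perm (Fin N)) : Finset ℕ :=
  (Finset.Ico 1 N).filter (fun k => wepos sh T k < wepos sh T (k - 1))

/-- Inversion number of a filling: pairs of cells `(x,y)` with
`0 < c̃(y) - c̃(x) < d` and `T(x) > T(y)`. -/
def winv {N : ℕ} (d : ℕ) (sh : Fin N → ℕ) (T : Equiv.Perm (Fin N)) : ℕ :=
  (Finset.univ.filter (fun p : Fin N × Fin N =>
    sh p.1 < sh p.2 ∧ sh p.2 < sh p.1 + d ∧ T p.2 < T p.1)).card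

/-- Generating function `∑_{T ∈ S} q^{inv(T)} t_{Des(T)}` over a set `S` of
standard fillings, in the free `ℤ[q]`-module on symbols `t_D`. -/
noncomputable def wGF {N : ℕ} (d : ℕ) (sh : Fin N → ℕ)
    (S : Set (Equiv.Perm (Fin N))) : Finset ℕ →₀ Polynomial ℤ :=
  ∑ T : Equiv.Perm (Fin N),
    S.indicator (fun T => Finsupp.single (wdes sh T)
      ((Polynomial.X : Polynomial ℤ) ^ winv d sh T)) T

/-!
The cells of `λ` and of `μ` are both labelled by `Fin n`. Away from the merged pair
`(i, i + 1)`, passing from `λ` (window `d = n`) to `μ` (window `d = n - 1`) preserves both the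
shifted-content order and the inversion windows `0 < c̃(y) - c̃(x) < d`. The only pair whose
window changes is `(i + 1, i)`: it is a window of `λ` exactly when `ε = 1`, and never one of `μ`.
So relabelling a filling `T` of `λ` as `T ∘ σ`, with `σ = (i i+1)^ε`, is a bijection onto the
fillings of `μ₀` and `μ₁` that keeps the descent set and the inversions, except for one extra
inversion, when `ε = 1`, on the fillings landing in `μ₁`.
-/

open Equiv Finset

section Fillings

variable {N : ℕ}

lemma wpos_congr_of_lt_iff {sh sh' : Fin N → ℕ} (h : ∀ x y, sh x < sh y ↔ sh' x < sh' y) :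
    wpos sh = wpos sh' := by
  ext x
  simp only [wpos, h]

lemma wpos_comp (sh : Fin N → ℕ) (σ : Perm (Fin N)) (x : Fin N) :
    wpos (sh ∘ σ) x = wpos sh (σ x) := by
  unfold wpos
  congr 1
  exact card_equiv σ (by simp)

lemma wdes_congr_of_wpos {sh sh' : Fin N → ℕ} {T T' : Perm (Fin N)}
    (h : ∀ k (hk : k < N), wpos sh (T⁻¹ ⟨k, hk⟩) = wpos sh' (T'⁻¹ ⟨k, hk⟩)) :
    wdes sh T = wdes sh' T' := by
  have hw : ∀ k, wepos sh T k = wepos sh' T' k := by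
    intro k
    unfold wepos
    split <;> simp_all
  simp only [wdes, hw]

lemma wdes_congr_of_lt_iff {sh sh' : Fin N → ℕ} (h : ∀ x y, sh x < sh y ↔ sh' x < sh' y)
    (T : Perm (Fin N)) : wdes sh T = wdes sh' T :=
  wdes_congr_of_wpos fun _ _ => by rw [wpos_congr_of_lt_iff h]

lemma wdes_comp (sh : Fin N → ℕ) (σ T : Perm (Fin N)) :
    wdes (sh ∘ σ) T = wdes sh (T * σ⁻¹) :=
  wdes_congr_of_wpos fun _ _ => by rw [wpos_comp, mul_inv_rev, inv_inv, Perm.mul_apply]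

lemma winv_comp (d : ℕ) (sh : Fin N → ℕ) (σ T : Perm (Fin N)) :
    winv d (sh ∘ σ) T = winv d sh (T * σ⁻¹) := by
  unfold winv
  refine card_equiv (σ.prodCongr σ) fun p => ?_
  rw [mem_filter, mem_filter]
  simp

lemma winv_eq_add_of_window_iff {d d' : ℕ} {sh sh' : Fin N → ℕ} (p : Fin N × Fin N)
    (hwin : ∀ q ≠ p, (sh q.1 < sh q.2 ∧ sh q.2 < sh q.1 + d) ↔
      (sh' q.1 < sh' q.2 ∧ sh' q.2 < sh' q.1 + d'))
    (hp : ¬(sh' p.1 < sh' p.2 ∧ sh' p.2 < sh' p.1 + d')) (T : Perm (Fin N)) :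
    winv d sh T = winv d' sh' T +
      if sh p.1 < sh p.2 ∧ sh p.2 < sh p.1 + d ∧ T p.2 < T p.1 then 1 else 0 := by
  have hp' : ¬(sh' p.1 < sh' p.2 ∧ sh' p.2 < sh' p.1 + d' ∧ T p.2 < T p.1) :=
    fun h => hp ⟨h.1, h.2.1⟩
  simp only [winv, card_filter]
  rw [Fintype.sum_eq_add_sum_compl p, Fintype.sum_eq_add_sum_compl p, if_neg hp', zero_add,
    add_comm]
  congr 1
  refine sum_congr rfl fun q hq => ?_
  simp only [← and_assoc, hwin q (by simpa using hq)]

lemma wGF_univ_eq_add_smul {d d' : ℕ} {sh sh' : Fin N → ℕ} (e : Perm (Fin N) ≃ Perm (Fin N))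
    {S₀ S₁ : Set (Perm (Fin N))} [DecidablePred (· ∈ S₁)]
    (hS : ∀ T, T ∈ S₀ ↔ T ∉ S₁) (k : ℕ)
    (hdes : ∀ T, wdes sh T = wdes sh' (e T))
    (hinv : ∀ T, winv d sh T = winv d' sh' (e T) + if e T ∈ S₁ then k else 0) :
    wGF d sh Set.univ =
      wGF d' sh' S₀ + (Polynomial.X : Polynomial ℤ) ^ k • wGF d' sh' S₁ := by
  simp only [wGF, smul_sum, ← sum_add_distrib]
  refine Fintype.sum_equiv e _ _ fun T => ?_
  by_cases hT : e T ∈ S₁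
  · rw [Set.indicator_of_notMem ((hS _).not.mpr (not_not.mpr hT)),
      Set.indicator_of_mem hT, Set.indicator_univ, zero_add, hdes, hinv, if_pos hT,
      Finsupp.smul_single, smul_eq_mul, pow_add, mul_comm]
  · rw [Set.indicator_of_mem ((hS _).mpr hT), Set.indicator_of_notMem hT,
      Set.indicator_univ, smul_zero, add_zero, hdes, hinv, if_neg hT, add_zero]

end Fillings

/-- Shifted contents of `μ` when the two merged cells keep their contents in `λ`. -/
def mergedShift (n : ℕ) (co : Fin n → ℕ) (i : ℕ) (j : Fin n) : ℕ :=
  (n - 1) * co j + if (j : ℕ) ≤ i then (j : ℕ) else (j : ℕ) - 1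

/-- Shifted contents of `μ` as in the statement: the content-0 cell of the domino is labelled `i`,
its content-1 cell `i1`. -/
def dominoShift (n : ℕ) (co : Fin n → ℕ) (i i1 : Fin n) (j : Fin n) : ℕ :=
  if (j : ℕ) < (i : ℕ) then (n - 1) * co j + (j : ℕ)
  else if j = i then (i : ℕ)
  else if j = i1 then (n - 1) + (i : ℕ)
  else (n - 1) * co j + ((j : ℕ) - 1)

/- `if x ≤ I then x else x - 1` is the index in `μ` of the cell with index `x` in `λ`, when the
cells `I` and `I + 1` are merged. -/
lemma Nat.shift_lt_iff_merge_lt {n I x y cx cy : ℕ} (hI : I + 1 < n) (hx : x < n)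
    (hy : y < n) (hcx : cx ≤ 1) (hcy : cy ≤ 1)
    (hxy : x = I → y = I + 1 → cx ≠ cy) (hyx : y = I → x = I + 1 → cx ≠ cy) :
    n * cx + x < n * cy + y ↔
      (n - 1) * cx + (if x ≤ I then x else x - 1) <
        (n - 1) * cy + (if y ≤ I then y else y - 1) := by
  interval_cases cx <;> interval_cases cy <;> split_ifs <;> omega

lemma Nat.shift_window_iff_merge_window {n I x y cx cy : ℕ} (hI : I + 1 < n) (hx : x < n)
    (hy : y < n) (hcx : cx ≤ 1) (hcy : cy ≤ 1)
    (hxy : x = I → y = I + 1 → cx ≠ cy) (hyx : y = I → x = I + 1 → cx ≠ cy)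
    (hpair : ¬(x = I + 1 ∧ y = I)) :
    (n * cx + x < n * cy + y ∧ n * cy + y < n * cx + x + n) ↔
      ((n - 1) * cx + (if x ≤ I then x else x - 1) <
          (n - 1) * cy + (if y ≤ I then y else y - 1) ∧
        (n - 1) * cy + (if y ≤ I then y else y - 1) <
          (n - 1) * cx + (if x ≤ I then x else x - 1) + (n - 1)) := by
  interval_cases cx <;> interval_cases cy <;> split_ifs <;> omega

section Merging

variable {n : ℕ} {co : Fin n → ℕ} {i i1 : Fin n}

lemma co_cases (hco : ∀ j, co j ≤ 1) (hne : co i ≠ co i1) :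
    co i = 0 ∧ co i1 = 1 ∨ co i = 1 ∧ co i1 = 0 := by
  have := hco i
  have := hco i1
  omega

lemma co_ne_of_pair (hi1 : (i1 : ℕ) = i + 1) (hne : co i ≠ co i1) {x y : Fin n}
    (hx : (x : ℕ) = i) (hy : (y : ℕ) = i + 1) : co x ≠ co y := by
  rwa [Fin.ext hx, Fin.ext (hy.trans hi1.symm)]

lemma shift_lt_iff_mergedShift_lt (hco : ∀ j, co j ≤ 1) (hi1 : (i1 : ℕ) = i + 1)
    (hne : co i ≠ co i1) (x y : Fin n) :
    n * co x + x < n * co y + y ↔ mergedShift n co i x < mergedShift n co i y :=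
  Nat.shift_lt_iff_merge_lt (hi1 ▸ i1.isLt) x.isLt y.isLt (hco x) (hco y)
    (co_ne_of_pair hi1 hne) fun hy hx => (co_ne_of_pair hi1 hne hy hx).symm

lemma winv_shift_eq (hco : ∀ j, co j ≤ 1) (hi1 : (i1 : ℕ) = i + 1) (hne : co i ≠ co i1)
    (T : Perm (Fin n)) :
    winv n (fun j => n * co j + (j : ℕ)) T =
      winv (n - 1) (mergedShift n co i) T + if co i = 1 ∧ T i < T i1 then 1 else 0 := by
  have hI : (i : ℕ) + 1 < n := hi1 ▸ i1.isLt
  have hc := co_cases hco hne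
  rw [winv_eq_add_of_window_iff (d' := n - 1) (sh' := mergedShift n co i) (i1, i)
    (fun q hq => ?_) ?_ T]
  · rcases hc with ⟨h0, h1⟩ | ⟨h0, h1⟩
    · simp only [h0, h1, hi1, zero_ne_one, false_and, if_false]
      rw [if_neg (by omega)]
    · have hwin : (i : ℕ) + 1 < n + i ∧ n + i < i + 1 + n := by omega
      simp [h0, h1, hi1, hwin]
  · rcases hc with ⟨h0, h1⟩ | ⟨h0, h1⟩ <;> simp [mergedShift, h0, h1, hi1]
    omega
  · exact Nat.shift_window_iff_merge_window hI q.1.isLt q.2.isLt (hco _) (hco _)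
      (co_ne_of_pair hi1 hne) (fun hy hx => (co_ne_of_pair hi1 hne hy hx).symm)
      fun ⟨h1, h2⟩ => hq (Prod.ext (Fin.ext (h1.trans hi1.symm)) (Fin.ext h2))

lemma dominoShift_comp_swap_pow (hco : ∀ j, co j ≤ 1) (hi1 : (i1 : ℕ) = i + 1)
    (hne : co i ≠ co i1) :
    dominoShift n co i i1 ∘ ⇑(swap i i1 ^ co i) = mergedShift n co i := by
  have hc := co_cases hco hne
  have hii1 : i ≠ i1 := fun h => by simp [h] at hi1
  funext j
  rcases hc with ⟨h0, h1⟩ | ⟨h0, h1⟩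
  · simp only [h0, pow_zero, Perm.coe_one, Function.comp_apply, id, dominoShift, mergedShift]
    split_ifs <;> subst_vars <;> simp_all <;> omega
  · simp only [h0, pow_one, Function.comp_apply]
    rcases eq_or_ne j i with rfl | hji
    · simp [dominoShift, mergedShift, hii1.symm, h0, hi1]
    rcases eq_or_ne j i1 with rfl | hji1
    · simp [dominoShift, mergedShift, h1, hi1]
    rw [swap_apply_of_ne_of_ne hji hji1]
    simp only [dominoShift, mergedShift]
    split_ifs <;> simp_all <;> omega

end Merging

theorem stmt14_general (n : ℕ) (ε : ℕ)
    (co : Fin n → ℕ) (hco : ∀ j, co j ≤ 1)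
    (i i1 : Fin n) (hi1 : (i1 : ℕ) = (i : ℕ) + 1)
    (hci : co i = ε) (hci1 : co i1 = 1 - ε) :
    wGF n (fun j => n * co j + (j : ℕ)) Set.univ
      = wGF (n - 1)
          (fun j => if (j : ℕ) < (i : ℕ) then (n - 1) * co j + (j : ℕ)
            else if j = i then (i : ℕ)
            else if j = i1 then (n - 1) + (i : ℕ)
            else (n - 1) * co j + ((j : ℕ) - 1))
          {T | T i < T i1}
      + ((Polynomial.X : Polynomial ℤ) ^ ε) •
        wGF (n - 1)
          (fun j => if (j : ℕ) < (i : ℕ) then (n - 1) * co j + (j : ℕ)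
            else if j = i then (i : ℕ)
            else if j = i1 then (n - 1) + (i : ℕ)
            else (n - 1) * co j + ((j : ℕ) - 1))
          {T | T i1 < T i} := by
  subst hci
  have hne : co i ≠ co i1 := by
    have := hco i
    omega
  have hii1 : i ≠ i1 := fun h => by simp [h] at hi1
  have hσ := dominoShift_comp_swap_pow hco hi1 hne
  refine wGF_univ_eq_add_smul (Equiv.mulRight (swap i i1 ^ co i)⁻¹) (fun T => ?_) (co i)
    (fun T => ?_) (fun T => ?_)
  · show T i < T i1 ↔ ¬T i1 < T i
    exact ⟨lt_asymm, fun h => (not_lt.mp h).lt_of_ne (T.injective.ne hii1)⟩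
  · rw [wdes_congr_of_lt_iff (shift_lt_iff_mergedShift_lt hco hi1 hne), ← hσ, wdes_comp]
    rfl
  · rw [winv_shift_eq hco hi1 hne, ← hσ, winv_comp]
    congr 1
    obtain h | h := Nat.le_one_iff_eq_zero_or_eq_one.mp (hco i)
    · simp [h]
    · simp [h, Perm.mul_apply, swap_inv]

/-- Lemma 4.8: let `λ` be an `n`-tuple of single cells with
0-1 contents `co`, the `i`-th cell of content `ε` and the `(i+1)`-st of content
`1-ε`; shifted contents `n·co(j) + j`, `d = n`, all fillings standard.  Let `μ`
be the `(n-1)`-tuple obtained by merging these two cells into a domino at index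
`i` (its content-0 cell is the original cell `i`, its content-1 cell the
original cell `i+1`), with shifted contents computed with `d = n - 1`; its
standard fillings are those with `T(i) < T(i+1)` for the horizontal domino
`μ₀`, resp. `T(i+1) < T(i)` for the vertical domino `μ₁`.  Then
`G_λ = G_{μ₀} + q^ε · G_{μ₁}`. -/
theorem stmt14 (n : ℕ) (hn : 2 ≤ n) (ε : ℕ) (hε : ε ≤ 1)
    (co : Fin n → ℕ) (hco : ∀ j, co j ≤ 1)
    (i i1 : Fin n) (hi1 : (i1 : ℕ) = (i : ℕ) + 1)
    (hci : co i = ε) (hci1 : co i1 = 1 - ε) :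
    wGF n (fun j => n * co j + (j : ℕ)) Set.univ
      = wGF (n - 1)
          (fun j => if (j : ℕ) < (i : ℕ) then (n - 1) * co j + (j : ℕ)
            else if j = i then (i : ℕ)
            else if j = i1 then (n - 1) + (i : ℕ)
            else (n - 1) * co j + ((j : ℕ) - 1))
          {T | T i < T i1}
      + ((Polynomial.X : Polynomial ℤ) ^ ε) •
        wGF (n - 1)
          (fun j => if (j : ℕ) < (i : ℕ) then (n - 1) * co j + (j : ℕ)
            else if j = i then (i : ℕ)
            else if j = i1 then (n - 1) + (i : ℕ)
            else (n - 1) * co j + ((j : ℕ) - 1))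
          {T | T i1 < T i} :=
  stmt14_general n ε co hco i i1 hi1 hci hci1
end

section
/- Let $d \geq 2$ and let $\boldsymbol{\lambda}$ be a $d$-tuple of skew shapes such that for some index $i$, $\lambda^{(i)}$ is a horizontal domino with content set $\{0,1\}$ and $\lambda^{(i+1)}$ is a vertical domino with content set $\{0,1\}$. Let $\boldsymbol{\mu}$ be obtained from $\boldsymbol{\lambda}$ by swapping $\lambda^{(i)}$ and $\lambda^{(i+1)}$. Then there is a bijection $\Psi$ between standard fillings of $\boldsymbol{\lambda}$ and standard fillings of $\boldsymbol{\mu}$ that preserves the inversion number, preserves all entries in the shapes $\lambda^{(j)}$ for $j \neq i, i+1$, and preserves the set of entries occupying cells of content $0$. Consequently $\sum_{\mathbf{T} \in \mathrm{SYT}(\boldsymbol{\lambda})} q^{\mathrm{inv}_d(\mathbf{T})} t_{\mathrm{Des}(\mathbf{T})} = \sum_{\mathbf{T} \in \mathrm{SYT}(\boldsymbol{\mu})} q^{\mathrm{inv}_d(\mathbf{T})} t_{\mathrm{Des}(\mathbf{T})}$. -/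
lemma prodCongr_pair {α : Type*} (e f : Equiv.Perm α) (x y : α) :
    (Equiv.prodCongr e f) (x, y) = (e x, f y) := by simp [Equiv.prodCongr]

lemma pair_ne_fst {α : Type*} {a c : α} (b e : α) (h : a ≠ c) : (a, b) ≠ (c, e) :=
  fun hh => h (congrArg Prod.fst hh)

lemma pair_ne_snd {α : Type*} {b e : α} (a c : α) (h : b ≠ e) : (a, b) ≠ (c, e) :=
  fun hh => h (congrArg Prod.snd hh)

lemma filterCardEquiv {α : Type*} [Fintype α] (P Q : α → Prop) [DecidablePred P] [DecidablePred Q]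
    (G : α ≃ α) (h : ∀ a, P a ↔ Q (G a)) :
    (Finset.univ.filter P).card = (Finset.univ.filter Q).card := by
  apply Finset.card_bij' (fun a _ => G a) (fun a _ => G.symm a)
  · intro a ha
    simp only [Finset.mem_filter, Finset.mem_univ, true_and] at ha ⊢
    exact (h a).mp ha
  · intro a ha
    simp only [Finset.mem_filter, Finset.mem_univ, true_and] at ha ⊢
    exact (h (G.symm a)).mpr (by rw [Equiv.apply_symm_apply]; exact ha)
  · intro a _; simp
  · intro a _; simp

def Hgeo15 {N : ℕ} (d i : ℕ) (sh : Fin N → ℕ) (h0 h1 v0 v1 : Fin N) : Prop :=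
  2 ≤ d ∧ i + 1 < d ∧ Function.Injective sh ∧
  sh h0 = i ∧ sh h1 = d + i ∧ sh v0 = i + 1 ∧ sh v1 = d + i + 1 ∧
  (∀ z : Fin N, z ≠ h0 → z ≠ h1 → z ≠ v0 → z ≠ v1 →
    sh z ≠ i ∧ sh z ≠ i + 1 ∧ sh z ≠ d + i ∧ sh z ≠ d + i + 1 ∧
    sh z ≠ 2*d + i ∧ sh z ≠ 2*d + i + 1)

lemma winv_comp_s15 {N : ℕ} (d : ℕ) (sh : Fin N → ℕ) (π U : Equiv.Perm (Fin N)) :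
    winv d (fun x => sh (π x)) U = winv d sh (U * π⁻¹) := by
  unfold winv
  apply filterCardEquiv _ _ (Equiv.prodCongr π π)
  rintro ⟨x, y⟩
  simp [Equiv.Perm.mul_apply]

lemma wpos_comp_s15 {N : ℕ} (sh : Fin N → ℕ) (π : Equiv.Perm (Fin N)) (z : Fin N) :
    wpos (fun x => sh (π x)) z = wpos sh (π z) := by
  unfold wpos
  congr 1
  apply filterCardEquiv _ _ π
  intro a
  simp

lemma wpos_lt_iff {N : ℕ} (sh : Fin N → ℕ) (hinj : Function.Injective sh) (u w : Fin N) :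
    wpos sh u < wpos sh w ↔ sh u < sh w := by
  have key : ∀ p q : Fin N, sh p < sh q → wpos sh p < wpos sh q := by
    intro p q hpq
    unfold wpos
    have hss : (Finset.univ.filter (fun y => sh y < sh p)) ⊂
        (Finset.univ.filter (fun y => sh y < sh q)) := by
      rw [Finset.ssubset_iff_of_subset]
      · exact ⟨p, Finset.mem_filter.mpr ⟨Finset.mem_univ p, hpq⟩, by simp⟩
      · intro z hz
        simp only [Finset.mem_filter, Finset.mem_univ, true_and] at hz ⊢
        exact hz.trans hpq
    have := Finset.card_lt_card hss
    omega
  constructor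
  · intro h
    rcases lt_trichotomy (sh u) (sh w) with h' | h' | h'
    · exact h'
    · cases hinj h'; exact absurd h (lt_irrefl _)
    · exact absurd h (not_lt.mpr (le_of_lt (key _ _ h')))
  · exact key u w

namespace Aux15

variable {N d i : ℕ} {sh : Fin N → ℕ} {h0 h1 v0 v1 : Fin N}

lemma cells_ne (H : Hgeo15 d i sh h0 h1 v0 v1) :
    h0 ≠ v0 ∧ h0 ≠ h1 ∧ h0 ≠ v1 ∧ v0 ≠ h1 ∧ v0 ≠ v1 ∧ h1 ≠ v1 := by
  obtain ⟨hd, hi, hinj, hh0, hh1, hv0, hv1, hexcl⟩ := H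
  refine ⟨?_, ?_, ?_, ?_, ?_, ?_⟩ <;>
    · intro h; have := congrArg sh h; omega

lemma cell_eq (H : Hgeo15 d i sh h0 h1 v0 v1) (z : Fin N) :
    (sh z = i → z = h0) ∧ (sh z = i + 1 → z = v0) ∧ (sh z = d + i → z = h1) ∧
    (sh z = d + i + 1 → z = v1) := by
  obtain ⟨hd, hi, hinj, hh0, hh1, hv0, hv1, hexcl⟩ := H
  exact ⟨fun h => hinj (h.trans hh0.symm), fun h => hinj (h.trans hv0.symm),
    fun h => hinj (h.trans hh1.symm), fun h => hinj (h.trans hv1.symm)⟩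

lemma D0 (H : Hgeo15 d i sh h0 h1 v0 v1) (x : Fin N) :
    (sh x = i ∧ sh (Equiv.swap h0 v0 x) = i+1) ∨
    (sh x = i+1 ∧ sh (Equiv.swap h0 v0 x) = i) ∨
    (sh (Equiv.swap h0 v0 x) = sh x ∧ (sh x = d+i ∨ sh x = d+i+1 ∨
      (sh x ≠ i ∧ sh x ≠ i+1 ∧ sh x ≠ d+i ∧ sh x ≠ d+i+1 ∧ sh x ≠ 2*d+i ∧ sh x ≠ 2*d+i+1))) := by
  obtain ⟨hd, hi, hinj, hh0, hh1, hv0, hv1, hexcl⟩ := H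
  rcases eq_or_ne x h0 with rfl | hx0
  · left; rw [Equiv.swap_apply_left]; exact ⟨hh0, hv0⟩
  rcases eq_or_ne x v0 with rfl | hx2
  · right; left; rw [Equiv.swap_apply_right]; exact ⟨hv0, hh0⟩
  rw [Equiv.swap_apply_of_ne_of_ne hx0 hx2]
  rcases eq_or_ne x h1 with rfl | hx1
  · exact Or.inr (Or.inr ⟨rfl, Or.inl hh1⟩)
  rcases eq_or_ne x v1 with rfl | hx3
  · exact Or.inr (Or.inr ⟨rfl, Or.inr (Or.inl hv1)⟩)
  · exact Or.inr (Or.inr ⟨rfl, Or.inr (Or.inr (hexcl x hx0 hx1 hx2 hx3))⟩)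

lemma D1 (H : Hgeo15 d i sh h0 h1 v0 v1) (x : Fin N) :
    (sh x = d+i ∧ sh (Equiv.swap h1 v1 x) = d+i+1) ∨
    (sh x = d+i+1 ∧ sh (Equiv.swap h1 v1 x) = d+i) ∨
    (sh (Equiv.swap h1 v1 x) = sh x ∧ (sh x = i ∨ sh x = i+1 ∨
      (sh x ≠ i ∧ sh x ≠ i+1 ∧ sh x ≠ d+i ∧ sh x ≠ d+i+1 ∧ sh x ≠ 2*d+i ∧ sh x ≠ 2*d+i+1))) := by
  obtain ⟨hd, hi, hinj, hh0, hh1, hv0, hv1, hexcl⟩ := H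
  rcases eq_or_ne x h1 with rfl | hx1
  · left; rw [Equiv.swap_apply_left]; exact ⟨hh1, hv1⟩
  rcases eq_or_ne x v1 with rfl | hx3
  · right; left; rw [Equiv.swap_apply_right]; exact ⟨hv1, hh1⟩
  rw [Equiv.swap_apply_of_ne_of_ne hx1 hx3]
  rcases eq_or_ne x h0 with rfl | hx0
  · exact Or.inr (Or.inr ⟨rfl, Or.inl hh0⟩)
  rcases eq_or_ne x v0 with rfl | hx2
  · exact Or.inr (Or.inr ⟨rfl, Or.inr (Or.inl hv0)⟩)
  · exact Or.inr (Or.inr ⟨rfl, Or.inr (Or.inr (hexcl x hx0 hx1 hx2 hx3))⟩)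

lemma D01 (H : Hgeo15 d i sh h0 h1 v0 v1) (x : Fin N) :
    (sh x = i ∧ sh ((Equiv.swap h0 v0 * Equiv.swap h1 v1) x) = i+1) ∨
    (sh x = i+1 ∧ sh ((Equiv.swap h0 v0 * Equiv.swap h1 v1) x) = i) ∨
    (sh x = d+i ∧ sh ((Equiv.swap h0 v0 * Equiv.swap h1 v1) x) = d+i+1) ∨
    (sh x = d+i+1 ∧ sh ((Equiv.swap h0 v0 * Equiv.swap h1 v1) x) = d+i) ∨
    (sh ((Equiv.swap h0 v0 * Equiv.swap h1 v1) x) = sh x ∧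
      (sh x ≠ i ∧ sh x ≠ i+1 ∧ sh x ≠ d+i ∧ sh x ≠ d+i+1 ∧ sh x ≠ 2*d+i ∧ sh x ≠ 2*d+i+1)) := by
  obtain ⟨hne01, hne0h1, hne0v1, hnev0h1, hnev0v1, hneh1v1⟩ := cells_ne H
  obtain ⟨hd, hi, hinj, hh0, hh1, hv0, hv1, hexcl⟩ := H
  rcases eq_or_ne x h0 with rfl | hx0
  · left
    rw [Equiv.Perm.mul_apply, Equiv.swap_apply_of_ne_of_ne hne0h1 hne0v1,
      Equiv.swap_apply_left]
    exact ⟨hh0, hv0⟩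
  rcases eq_or_ne x v0 with rfl | hx2
  · right; left
    rw [Equiv.Perm.mul_apply, Equiv.swap_apply_of_ne_of_ne hnev0h1 hnev0v1,
      Equiv.swap_apply_right]
    exact ⟨hv0, hh0⟩
  rcases eq_or_ne x h1 with rfl | hx1
  · right; right; left
    rw [Equiv.Perm.mul_apply, Equiv.swap_apply_left,
      Equiv.swap_apply_of_ne_of_ne (Ne.symm hne0v1) (Ne.symm hnev0v1)]
    exact ⟨hh1, hv1⟩
  rcases eq_or_ne x v1 with rfl | hx3
  · right; right; right; left
    rw [Equiv.Perm.mul_apply, Equiv.swap_apply_right,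
      Equiv.swap_apply_of_ne_of_ne (Ne.symm hne0h1) (Ne.symm hnev0h1)]
    exact ⟨hv1, hh1⟩
  · right; right; right; right
    rw [Equiv.Perm.mul_apply, Equiv.swap_apply_of_ne_of_ne hx1 hx3,
      Equiv.swap_apply_of_ne_of_ne hx0 hx2]
    exact ⟨rfl, hexcl x hx0 hx1 hx2 hx3⟩

/-- window iff for swap h0 v0 -/
lemma winA (H : Hgeo15 d i sh h0 h1 v0 v1) (x y : Fin N)
    (e1 : ¬(x = h0 ∧ y = v0)) (e2 : ¬(x = v0 ∧ y = h0))
    (e3 : ¬(x = h0 ∧ y = h1)) (e4 : ¬(x = v0 ∧ y = h1)) :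
    (sh x < sh y ∧ sh y < sh x + d) ↔
      (sh (Equiv.swap h0 v0 x) < sh (Equiv.swap h0 v0 y) ∧
        sh (Equiv.swap h0 v0 y) < sh (Equiv.swap h0 v0 x) + d) := by
  have dx := D0 H x; have dy := D0 H y
  have cx := cell_eq H x; have cy := cell_eq H y
  obtain ⟨hd, hi, hinj, hh0, hh1, hv0, hv1, hexcl⟩ := H
  have n1 : ¬(sh x = i ∧ sh y = i+1) := fun ⟨p, q⟩ => e1 ⟨cx.1 p, cy.2.1 q⟩
  have n2 : ¬(sh x = i+1 ∧ sh y = i) := fun ⟨p, q⟩ => e2 ⟨cx.2.1 p, cy.1 q⟩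
  have n3 : ¬(sh x = i ∧ sh y = d+i) := fun ⟨p, q⟩ => e3 ⟨cx.1 p, cy.2.2.1 q⟩
  have n4 : ¬(sh x = i+1 ∧ sh y = d+i) := fun ⟨p, q⟩ => e4 ⟨cx.2.1 p, cy.2.2.1 q⟩
  clear e1 e2 e3 e4 cx cy
  rcases dx with ⟨p1, q1⟩ | ⟨p1, q1⟩ | ⟨q1, p1⟩ <;>
    rcases dy with ⟨p2, q2⟩ | ⟨p2, q2⟩ | ⟨q2, p2⟩ <;> omega

/-- window iff for swap h1 v1 -/
lemma winB (H : Hgeo15 d i sh h0 h1 v0 v1) (x y : Fin N)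
    (e1 : ¬(x = h1 ∧ y = v1)) (e2 : ¬(x = v1 ∧ y = h1))
    (e3 : ¬(x = v0 ∧ y = h1)) (e4 : ¬(x = v0 ∧ y = v1)) :
    (sh x < sh y ∧ sh y < sh x + d) ↔
      (sh (Equiv.swap h1 v1 x) < sh (Equiv.swap h1 v1 y) ∧
        sh (Equiv.swap h1 v1 y) < sh (Equiv.swap h1 v1 x) + d) := by
  have dx := D1 H x; have dy := D1 H y
  have cx := cell_eq H x; have cy := cell_eq H y
  obtain ⟨hd, hi, hinj, hh0, hh1, hv0, hv1, hexcl⟩ := H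
  have n1 : ¬(sh x = d+i ∧ sh y = d+i+1) := fun ⟨p, q⟩ => e1 ⟨cx.2.2.1 p, cy.2.2.2 q⟩
  have n2 : ¬(sh x = d+i+1 ∧ sh y = d+i) := fun ⟨p, q⟩ => e2 ⟨cx.2.2.2 p, cy.2.2.1 q⟩
  have n3 : ¬(sh x = i+1 ∧ sh y = d+i) := fun ⟨p, q⟩ => e3 ⟨cx.2.1 p, cy.2.2.1 q⟩
  have n4 : ¬(sh x = i+1 ∧ sh y = d+i+1) := fun ⟨p, q⟩ => e4 ⟨cx.2.1 p, cy.2.2.2 q⟩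
  clear e1 e2 e3 e4 cx cy
  rcases dx with ⟨p1, q1⟩ | ⟨p1, q1⟩ | ⟨q1, p1⟩ <;>
    rcases dy with ⟨p2, q2⟩ | ⟨p2, q2⟩ | ⟨q2, p2⟩ <;> omega

/-- window iff for the double swap -/
lemma winC (H : Hgeo15 d i sh h0 h1 v0 v1) (x y : Fin N)
    (e1 : ¬(x = h0 ∧ y = v0)) (e2 : ¬(x = v0 ∧ y = h0))
    (e3 : ¬(x = h0 ∧ y = v1)) (e4 : ¬(x = v0 ∧ y = h1))
    (e5 : ¬(x = h1 ∧ y = v1)) (e6 : ¬(x = v1 ∧ y = h1)) :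
    (sh x < sh y ∧ sh y < sh x + d) ↔
      (sh ((Equiv.swap h0 v0 * Equiv.swap h1 v1) x) <
          sh ((Equiv.swap h0 v0 * Equiv.swap h1 v1) y) ∧
        sh ((Equiv.swap h0 v0 * Equiv.swap h1 v1) y) <
          sh ((Equiv.swap h0 v0 * Equiv.swap h1 v1) x) + d) := by
  have dx := D01 H x; have dy := D01 H y
  have cx := cell_eq H x; have cy := cell_eq H y
  obtain ⟨hd, hi, hinj, hh0, hh1, hv0, hv1, hexcl⟩ := H
  have n1 : ¬(sh x = i ∧ sh y = i+1) := fun ⟨p, q⟩ => e1 ⟨cx.1 p, cy.2.1 q⟩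
  have n2 : ¬(sh x = i+1 ∧ sh y = i) := fun ⟨p, q⟩ => e2 ⟨cx.2.1 p, cy.1 q⟩
  have n3 : ¬(sh x = i ∧ sh y = d+i+1) := fun ⟨p, q⟩ => e3 ⟨cx.1 p, cy.2.2.2 q⟩
  have n4 : ¬(sh x = i+1 ∧ sh y = d+i) := fun ⟨p, q⟩ => e4 ⟨cx.2.1 p, cy.2.2.1 q⟩
  have n5 : ¬(sh x = d+i ∧ sh y = d+i+1) := fun ⟨p, q⟩ => e5 ⟨cx.2.2.1 p, cy.2.2.2 q⟩
  have n6 : ¬(sh x = d+i+1 ∧ sh y = d+i) := fun ⟨p, q⟩ => e6 ⟨cx.2.2.2 p, cy.2.2.1 q⟩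
  clear e1 e2 e5 e6 cx cy
  rcases dx with ⟨p1, q1⟩ | ⟨p1, q1⟩ | ⟨p1, q1⟩ | ⟨p1, q1⟩ | ⟨q1, p1⟩ <;>
    rcases dy with ⟨p2, q2⟩ | ⟨p2, q2⟩ | ⟨p2, q2⟩ | ⟨p2, q2⟩ | ⟨q2, p2⟩ <;> omega

/-- strict order iff for swap h0 v0 -/
lemma ordA (H : Hgeo15 d i sh h0 h1 v0 v1) (x y : Fin N)
    (e1 : ¬(x = h0 ∧ y = v0)) (e2 : ¬(x = v0 ∧ y = h0)) :
    sh (Equiv.swap h0 v0 x) < sh (Equiv.swap h0 v0 y) ↔ sh x < sh y := by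
  have dx := D0 H x; have dy := D0 H y
  have cx := cell_eq H x; have cy := cell_eq H y
  obtain ⟨hd, hi, hinj, hh0, hh1, hv0, hv1, hexcl⟩ := H
  have n1 : ¬(sh x = i ∧ sh y = i+1) := fun ⟨p, q⟩ => e1 ⟨cx.1 p, cy.2.1 q⟩
  have n2 : ¬(sh x = i+1 ∧ sh y = i) := fun ⟨p, q⟩ => e2 ⟨cx.2.1 p, cy.1 q⟩
  clear e1 e2 cx cy
  rcases dx with ⟨p1, q1⟩ | ⟨p1, q1⟩ | ⟨q1, p1⟩ <;>
    rcases dy with ⟨p2, q2⟩ | ⟨p2, q2⟩ | ⟨q2, p2⟩ <;> omega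

lemma ordB (H : Hgeo15 d i sh h0 h1 v0 v1) (x y : Fin N)
    (e1 : ¬(x = h1 ∧ y = v1)) (e2 : ¬(x = v1 ∧ y = h1)) :
    sh (Equiv.swap h1 v1 x) < sh (Equiv.swap h1 v1 y) ↔ sh x < sh y := by
  have dx := D1 H x; have dy := D1 H y
  have cx := cell_eq H x; have cy := cell_eq H y
  obtain ⟨hd, hi, hinj, hh0, hh1, hv0, hv1, hexcl⟩ := H
  have n1 : ¬(sh x = d+i ∧ sh y = d+i+1) := fun ⟨p, q⟩ => e1 ⟨cx.2.2.1 p, cy.2.2.2 q⟩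
  have n2 : ¬(sh x = d+i+1 ∧ sh y = d+i) := fun ⟨p, q⟩ => e2 ⟨cx.2.2.2 p, cy.2.2.1 q⟩
  clear e1 e2 cx cy
  rcases dx with ⟨p1, q1⟩ | ⟨p1, q1⟩ | ⟨q1, p1⟩ <;>
    rcases dy with ⟨p2, q2⟩ | ⟨p2, q2⟩ | ⟨q2, p2⟩ <;> omega

lemma ordC (H : Hgeo15 d i sh h0 h1 v0 v1) (x y : Fin N)
    (e1 : ¬(x = h0 ∧ y = v0)) (e2 : ¬(x = v0 ∧ y = h0))
    (e5 : ¬(x = h1 ∧ y = v1)) (e6 : ¬(x = v1 ∧ y = h1)) :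
    sh ((Equiv.swap h0 v0 * Equiv.swap h1 v1) x) <
        sh ((Equiv.swap h0 v0 * Equiv.swap h1 v1) y) ↔ sh x < sh y := by
  have dx := D01 H x; have dy := D01 H y
  have cx := cell_eq H x; have cy := cell_eq H y
  obtain ⟨hd, hi, hinj, hh0, hh1, hv0, hv1, hexcl⟩ := H
  have n1 : ¬(sh x = i ∧ sh y = i+1) := fun ⟨p, q⟩ => e1 ⟨cx.1 p, cy.2.1 q⟩
  have n2 : ¬(sh x = i+1 ∧ sh y = i) := fun ⟨p, q⟩ => e2 ⟨cx.2.1 p, cy.1 q⟩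
  have n5 : ¬(sh x = d+i ∧ sh y = d+i+1) := fun ⟨p, q⟩ => e5 ⟨cx.2.2.1 p, cy.2.2.2 q⟩
  have n6 : ¬(sh x = d+i+1 ∧ sh y = d+i) := fun ⟨p, q⟩ => e6 ⟨cx.2.2.2 p, cy.2.2.1 q⟩
  clear e1 e2 e5 e6 cx cy
  rcases dx with ⟨p1, q1⟩ | ⟨p1, q1⟩ | ⟨p1, q1⟩ | ⟨p1, q1⟩ | ⟨q1, p1⟩ <;>
    rcases dy with ⟨p2, q2⟩ | ⟨p2, q2⟩ | ⟨p2, q2⟩ | ⟨p2, q2⟩ | ⟨q2, p2⟩ <;> omega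

end Aux15

namespace Aux15
variable {N d i : ℕ} {sh : Fin N → ℕ} {h0 h1 v0 v1 : Fin N}

lemma swaps_comm (H : Hgeo15 d i sh h0 h1 v0 v1) (w : Fin N) :
    Equiv.swap h1 v1 (Equiv.swap h0 v0 w) = Equiv.swap h0 v0 (Equiv.swap h1 v1 w) := by
  obtain ⟨hne01, hne0h1, hne0v1, hnev0h1, hnev0v1, hneh1v1⟩ := cells_ne H
  have s00 : Equiv.swap h0 v0 h0 = v0 := Equiv.swap_apply_left _ _
  have s01 : Equiv.swap h0 v0 v0 = h0 := Equiv.swap_apply_right _ _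
  have s10 : Equiv.swap h1 v1 h1 = v1 := Equiv.swap_apply_left _ _
  have s11 : Equiv.swap h1 v1 v1 = h1 := Equiv.swap_apply_right _ _
  have s0h1 : Equiv.swap h0 v0 h1 = h1 :=
    Equiv.swap_apply_of_ne_of_ne (Ne.symm hne0h1) (Ne.symm hnev0h1)
  have s0v1 : Equiv.swap h0 v0 v1 = v1 :=
    Equiv.swap_apply_of_ne_of_ne (Ne.symm hne0v1) (Ne.symm hnev0v1)
  have s1h0 : Equiv.swap h1 v1 h0 = h0 := Equiv.swap_apply_of_ne_of_ne hne0h1 hne0v1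
  have s1v0 : Equiv.swap h1 v1 v0 = v0 := Equiv.swap_apply_of_ne_of_ne hnev0h1 hnev0v1
  rcases eq_or_ne w h0 with rfl | hw0
  · rw [s00, s1v0, s1h0, s00]
  rcases eq_or_ne w v0 with rfl | hw2
  · rw [s01, s1h0, s1v0, s01]
  rcases eq_or_ne w h1 with rfl | hw1
  · rw [s0h1, s10, s0v1]
  rcases eq_or_ne w v1 with rfl | hw3
  · rw [s0v1, s11, s0h1]
  · rw [Equiv.swap_apply_of_ne_of_ne hw0 hw2, Equiv.swap_apply_of_ne_of_ne hw1 hw3,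
      Equiv.swap_apply_of_ne_of_ne hw0 hw2]

lemma tau01_sq (H : Hgeo15 d i sh h0 h1 v0 v1) :
    (Equiv.swap h0 v0 * Equiv.swap h1 v1) * (Equiv.swap h0 v0 * Equiv.swap h1 v1) = 1 := by
  apply Equiv.ext
  intro z
  simp only [Equiv.Perm.mul_apply, Equiv.Perm.one_apply]
  rw [swaps_comm H (Equiv.swap h1 v1 z), Equiv.swap_apply_self, Equiv.swap_apply_self]



lemma invA (H : Hgeo15 d i sh h0 h1 v0 v1) (T : Equiv.Perm (Fin N))
    (hab : T h0 < T h1) (hce : T v1 < T v0) (hac : T h0 < T v1) (hbe : T h1 < T v0) :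
    winv d sh (T * Equiv.swap h0 v0) = winv d sh T := by
  obtain ⟨hne01, hne0h1, hne0v1, hnev0h1, hnev0v1, hneh1v1⟩ := cells_ne H
  have hwin := winA H
  have hae : T h0 < T v0 := hac.trans hce
  obtain ⟨hd2, hi, hinj, hh0, hh1, hv0, hv1, hexcl⟩ := H
  have s00 : Equiv.swap h0 v0 h0 = v0 := Equiv.swap_apply_left _ _
  have s01 : Equiv.swap h0 v0 v0 = h0 := Equiv.swap_apply_right _ _
  have s0h1 : Equiv.swap h0 v0 h1 = h1 :=
    Equiv.swap_apply_of_ne_of_ne (Ne.symm hne0h1) (Ne.symm hnev0h1)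
  unfold winv
  apply filterCardEquiv _ _
    ((Equiv.prodCongr (Equiv.swap h0 v0) (Equiv.swap h0 v0)).trans
      (Equiv.swap ((v0, h0) : Fin N × Fin N) ((v0, h1) : Fin N × Fin N)))
  rintro ⟨x, y⟩
  simp only [Equiv.trans_apply, prodCongr_pair]
  by_cases hA : x = h0 ∧ y = v0
  · obtain ⟨rfl, rfl⟩ := hA
    rw [s00, s01, Equiv.swap_apply_left]
    simp only [Equiv.Perm.mul_apply, s00, s01]
    constructor
    · rintro -; exact ⟨by omega, by omega, hbe⟩
    · rintro -; exact ⟨by omega, by omega, hae⟩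
  by_cases hB : x = v0 ∧ y = h0
  · obtain ⟨rfl, rfl⟩ := hB
    rw [s00, s01]
    rw [Equiv.swap_apply_of_ne_of_ne (by simp [Prod.mk.injEq]; intro h; exact absurd h hne01)
      (by simp [Prod.mk.injEq]; intro h; exact absurd h hne01)]
    simp only [Equiv.Perm.mul_apply, s00, s01]
    constructor
    · rintro ⟨u1, -, -⟩; exact absurd u1 (by omega)
    · rintro ⟨-, -, u3⟩; exact absurd u3 (not_lt.mpr hae.le)
  by_cases hC : x = h0 ∧ y = h1
  · obtain ⟨rfl, rfl⟩ := hC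
    rw [s00, s0h1, Equiv.swap_apply_right]
    simp only [Equiv.Perm.mul_apply]
    constructor
    · rintro ⟨-, u2, -⟩; exact absurd u2 (by omega)
    · rintro ⟨u1, -, -⟩; exact absurd u1 (by omega)
  by_cases hD : x = v0 ∧ y = h1
  · obtain ⟨rfl, rfl⟩ := hD
    rw [s01, s0h1]
    rw [Equiv.swap_apply_of_ne_of_ne (by simp [Prod.mk.injEq]; intro h; exact absurd h hne01)
      (by simp [Prod.mk.injEq]; intro h; exact absurd h hne01)]
    simp only [Equiv.Perm.mul_apply, s01, s0h1]
    constructor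
    · rintro ⟨-, -, u3⟩; exact absurd u3 (not_lt.mpr hab.le)
    · rintro ⟨-, u2, -⟩; exact absurd u2 (by omega)
  -- generic branch
  have swinv : ∀ z w : Fin N, Equiv.swap h0 v0 z = w → z = Equiv.swap h0 v0 w := by
    intro z w h; rw [← h, Equiv.swap_apply_self]
  rw [Equiv.swap_apply_of_ne_of_ne
    (by intro h; rw [Prod.mk.injEq] at h
        exact hA ⟨by rw [swinv x v0 h.1, s01], by rw [swinv y h0 h.2, s00]⟩)
    (by intro h; rw [Prod.mk.injEq] at h
        exact hC ⟨by rw [swinv x v0 h.1, s01], by rw [swinv y h1 h.2, s0h1]⟩)]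
  have hw := hwin x y hA hB hC hD
  simp only [Equiv.Perm.mul_apply]
  constructor
  · rintro ⟨u1, u2, u3⟩; exact ⟨(hw.mp ⟨u1, u2⟩).1, (hw.mp ⟨u1, u2⟩).2, u3⟩
  · rintro ⟨u1, u2, u3⟩; exact ⟨(hw.mpr ⟨u1, u2⟩).1, (hw.mpr ⟨u1, u2⟩).2, u3⟩

lemma invB (H : Hgeo15 d i sh h0 h1 v0 v1) (T : Equiv.Perm (Fin N))
    (hab : T h0 < T h1) (hce : T v1 < T v0) (hca : T v1 < T h0) (heb : T v0 < T h1) :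
    winv d sh (T * Equiv.swap h1 v1) = winv d sh T := by
  obtain ⟨hne01, hne0h1, hne0v1, hnev0h1, hnev0v1, hneh1v1⟩ := cells_ne H
  have hwin := winB H
  have hcb : T v1 < T h1 := hca.trans hab
  obtain ⟨hd2, hi, hinj, hh0, hh1, hv0, hv1, hexcl⟩ := H
  have s10 : Equiv.swap h1 v1 h1 = v1 := Equiv.swap_apply_left _ _
  have s11 : Equiv.swap h1 v1 v1 = h1 := Equiv.swap_apply_right _ _
  have s1v0 : Equiv.swap h1 v1 v0 = v0 := Equiv.swap_apply_of_ne_of_ne hnev0h1 hnev0v1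
  unfold winv
  apply filterCardEquiv _ _
    ((Equiv.prodCongr (Equiv.swap h1 v1) (Equiv.swap h1 v1)).trans
      (Equiv.swap ((v0, v1) : Fin N × Fin N) ((h1, v1) : Fin N × Fin N)))
  rintro ⟨x, y⟩
  simp only [Equiv.trans_apply, prodCongr_pair]
  by_cases hA : x = h1 ∧ y = v1
  · obtain ⟨rfl, rfl⟩ := hA
    rw [s10, s11]
    rw [Equiv.swap_apply_of_ne_of_ne (pair_ne_fst _ _ (Ne.symm hnev0v1))
      (pair_ne_fst _ _ (Ne.symm hneh1v1))]
    simp only [Equiv.Perm.mul_apply, s10, s11]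
    constructor
    · rintro ⟨-, -, u3⟩; exact absurd u3 (not_lt.mpr hcb.le)
    · rintro ⟨u1, -, -⟩; exact absurd u1 (by omega)
  by_cases hB : x = v1 ∧ y = h1
  · obtain ⟨rfl, rfl⟩ := hB
    rw [s10, s11, Equiv.swap_apply_right]
    simp only [Equiv.Perm.mul_apply]
    constructor
    · rintro ⟨u1, -, -⟩; exact absurd u1 (by omega)
    · rintro ⟨-, u2, -⟩; exact absurd u2 (by omega)
  by_cases hC : x = v0 ∧ y = h1
  · obtain ⟨rfl, rfl⟩ := hC
    rw [s10, s1v0, Equiv.swap_apply_left]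
    simp only [Equiv.Perm.mul_apply, s10, s1v0]
    constructor
    · rintro -; exact ⟨by omega, by omega, hcb⟩
    · rintro -; exact ⟨by omega, by omega, hce⟩
  by_cases hD : x = v0 ∧ y = v1
  · obtain ⟨rfl, rfl⟩ := hD
    rw [s11, s1v0]
    rw [Equiv.swap_apply_of_ne_of_ne (pair_ne_snd _ _ hneh1v1) (pair_ne_fst _ _ hnev0h1)]
    simp only [Equiv.Perm.mul_apply, s11, s1v0]
    constructor
    · rintro ⟨-, u2, -⟩; exact absurd u2 (by omega)
    · rintro ⟨-, -, u3⟩; exact absurd u3 (not_lt.mpr heb.le)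
  have swinv : ∀ z w : Fin N, Equiv.swap h1 v1 z = w → z = Equiv.swap h1 v1 w := by
    intro z w h; rw [← h, Equiv.swap_apply_self]
  rw [Equiv.swap_apply_of_ne_of_ne
    (by intro h; rw [Prod.mk.injEq] at h
        exact hC ⟨by rw [swinv x v0 h.1, s1v0], by rw [swinv y v1 h.2, s11]⟩)
    (by intro h; rw [Prod.mk.injEq] at h
        exact hB ⟨by rw [swinv x h1 h.1, s10], by rw [swinv y v1 h.2, s11]⟩)]
  have hw := hwin x y hA hB hC hD
  simp only [Equiv.Perm.mul_apply]
  constructor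
  · rintro ⟨u1, u2, u3⟩; exact ⟨(hw.mp ⟨u1, u2⟩).1, (hw.mp ⟨u1, u2⟩).2, u3⟩
  · rintro ⟨u1, u2, u3⟩; exact ⟨(hw.mpr ⟨u1, u2⟩).1, (hw.mpr ⟨u1, u2⟩).2, u3⟩

lemma invC1 (H : Hgeo15 d i sh h0 h1 v0 v1) (T : Equiv.Perm (Fin N))
    (hab : T h0 < T h1) (hce : T v1 < T v0) (hac : T h0 < T v1) (heb : T v0 < T h1) :
    winv d sh (T * (Equiv.swap h0 v0 * Equiv.swap h1 v1)) = winv d sh T := by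
  obtain ⟨hne01, hne0h1, hne0v1, hnev0h1, hnev0v1, hneh1v1⟩ := cells_ne H
  have hwin := winC H
  have hsq := tau01_sq H
  have hae : T h0 < T v0 := hac.trans hce
  have hcb : T v1 < T h1 := hce.trans heb
  obtain ⟨hd2, hi, hinj, hh0, hh1, hv0, hv1, hexcl⟩ := H
  have s00 : Equiv.swap h0 v0 h0 = v0 := Equiv.swap_apply_left _ _
  have s01 : Equiv.swap h0 v0 v0 = h0 := Equiv.swap_apply_right _ _
  have s10 : Equiv.swap h1 v1 h1 = v1 := Equiv.swap_apply_left _ _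
  have s11 : Equiv.swap h1 v1 v1 = h1 := Equiv.swap_apply_right _ _
  have s0h1 : Equiv.swap h0 v0 h1 = h1 :=
    Equiv.swap_apply_of_ne_of_ne (Ne.symm hne0h1) (Ne.symm hnev0h1)
  have s0v1 : Equiv.swap h0 v0 v1 = v1 :=
    Equiv.swap_apply_of_ne_of_ne (Ne.symm hne0v1) (Ne.symm hnev0v1)
  have s1h0 : Equiv.swap h1 v1 h0 = h0 := Equiv.swap_apply_of_ne_of_ne hne0h1 hne0v1
  have s1v0 : Equiv.swap h1 v1 v0 = v0 := Equiv.swap_apply_of_ne_of_ne hnev0h1 hnev0v1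
  have c0 : (Equiv.swap h0 v0 * Equiv.swap h1 v1) h0 = v0 := by
    rw [Equiv.Perm.mul_apply, s1h0, s00]
  have c1 : (Equiv.swap h0 v0 * Equiv.swap h1 v1) v0 = h0 := by
    rw [Equiv.Perm.mul_apply, s1v0, s01]
  have c2 : (Equiv.swap h0 v0 * Equiv.swap h1 v1) h1 = v1 := by
    rw [Equiv.Perm.mul_apply, s10, s0v1]
  have c3 : (Equiv.swap h0 v0 * Equiv.swap h1 v1) v1 = h1 := by
    rw [Equiv.Perm.mul_apply, s11, s0h1]
  have swinv : ∀ z w : Fin N, (Equiv.swap h0 v0 * Equiv.swap h1 v1) z = w →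
      z = (Equiv.swap h0 v0 * Equiv.swap h1 v1) w := by
    intro z w h
    rw [← h]
    have := congrFun (congrArg (fun (g : Equiv.Perm (Fin N)) => (g : Fin N → Fin N)) hsq) z
    simp only [Equiv.Perm.mul_apply] at this ⊢
    simp only [Equiv.Perm.coe_mul, Function.comp_apply, Equiv.Perm.coe_one, id_eq] at this
    exact this.symm
  unfold winv
  apply filterCardEquiv _ _
    ((Equiv.prodCongr (Equiv.swap h0 v0 * Equiv.swap h1 v1)
        (Equiv.swap h0 v0 * Equiv.swap h1 v1)).trans
      (Equiv.swap ((v0, h0) : Fin N × Fin N) ((h1, v1) : Fin N × Fin N)))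
  rintro ⟨x, y⟩
  simp only [Equiv.trans_apply, prodCongr_pair]
  by_cases hA : x = h0 ∧ y = v0
  · obtain ⟨rfl, rfl⟩ := hA
    rw [c0, c1, Equiv.swap_apply_left]
    simp only [Equiv.Perm.mul_apply, s1v0, s01, s1h0, s00]
    constructor
    · rintro -; exact ⟨by omega, by omega, hcb⟩
    · rintro -; exact ⟨by omega, by omega, hae⟩
  by_cases hB : x = v0 ∧ y = h0
  · obtain ⟨rfl, rfl⟩ := hB
    rw [c0, c1]
    rw [Equiv.swap_apply_of_ne_of_ne (pair_ne_fst _ _ hne01) (pair_ne_fst _ _ hne0h1)]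
    simp only [Equiv.Perm.mul_apply, s1v0, s01, s1h0, s00]
    constructor
    · rintro ⟨u1, -, -⟩; exact absurd u1 (by omega)
    · rintro ⟨-, -, u3⟩; exact absurd u3 (not_lt.mpr hae.le)
  by_cases hC : x = h0 ∧ y = v1
  · obtain ⟨rfl, rfl⟩ := hC
    rw [c0, c3]
    rw [Equiv.swap_apply_of_ne_of_ne (pair_ne_snd _ _ (Ne.symm hne0h1))
      (pair_ne_fst _ _ hnev0h1)]
    simp only [Equiv.Perm.mul_apply, s11, s0h1, s1h0, s00]
    constructor
    · rintro ⟨-, u2, -⟩; exact absurd u2 (by omega)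
    · rintro ⟨-, -, u3⟩; exact absurd u3 (not_lt.mpr heb.le)
  by_cases hD : x = v0 ∧ y = h1
  · obtain ⟨rfl, rfl⟩ := hD
    rw [c1, c2]
    rw [Equiv.swap_apply_of_ne_of_ne (pair_ne_fst _ _ hne01) (pair_ne_fst _ _ hne0h1)]
    simp only [Equiv.Perm.mul_apply, s10, s0v1, s1v0, s01]
    constructor
    · rintro ⟨-, -, u3⟩; exact absurd u3 (not_lt.mpr hac.le)
    · rintro ⟨-, u2, -⟩; exact absurd u2 (by omega)
  by_cases hE : x = h1 ∧ y = v1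
  · obtain ⟨rfl, rfl⟩ := hE
    rw [c2, c3]
    rw [Equiv.swap_apply_of_ne_of_ne (pair_ne_fst _ _ (Ne.symm hnev0v1))
      (pair_ne_fst _ _ (Ne.symm hneh1v1))]
    simp only [Equiv.Perm.mul_apply, s11, s0h1, s10, s0v1]
    constructor
    · rintro ⟨-, -, u3⟩; exact absurd u3 (not_lt.mpr hcb.le)
    · rintro ⟨u1, -, -⟩; exact absurd u1 (by omega)
  by_cases hF : x = v1 ∧ y = h1
  · obtain ⟨rfl, rfl⟩ := hF
    rw [c2, c3, Equiv.swap_apply_right]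
    simp only [Equiv.Perm.mul_apply]
    constructor
    · rintro ⟨u1, -, -⟩; exact absurd u1 (by omega)
    · rintro ⟨u1, -, -⟩; exact absurd u1 (by omega)
  rw [Equiv.swap_apply_of_ne_of_ne
    (by intro h; rw [Prod.mk.injEq] at h
        exact hA ⟨by rw [swinv x v0 h.1, c1], by rw [swinv y h0 h.2, c0]⟩)
    (by intro h; rw [Prod.mk.injEq] at h
        exact hF ⟨by rw [swinv x h1 h.1, c2], by rw [swinv y v1 h.2, c3]⟩)]
  have hw := hwin x y hA hB hC hD hE hF
  simp only [Equiv.Perm.mul_apply]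
  constructor
  · rintro ⟨u1, u2, u3⟩; exact ⟨(hw.mp ⟨u1, u2⟩).1, (hw.mp ⟨u1, u2⟩).2, u3⟩
  · rintro ⟨u1, u2, u3⟩; exact ⟨(hw.mpr ⟨u1, u2⟩).1, (hw.mpr ⟨u1, u2⟩).2, u3⟩


lemma invC2 (H : Hgeo15 d i sh h0 h1 v0 v1) (T : Equiv.Perm (Fin N))
    (hab : T h0 < T h1) (hce : T v1 < T v0) (hca : T v1 < T h0) (hbe : T h1 < T v0) :
    winv d sh (T * (Equiv.swap h0 v0 * Equiv.swap h1 v1)) = winv d sh T := by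
  obtain ⟨hne01, hne0h1, hne0v1, hnev0h1, hnev0v1, hneh1v1⟩ := cells_ne H
  have hwin := winC H
  have hsq := tau01_sq H
  have habe : T h0 < T v0 := hab.trans hbe
  have hcab : T v1 < T h1 := hca.trans hab
  obtain ⟨hd2, hi, hinj, hh0, hh1, hv0, hv1, hexcl⟩ := H
  have s00 : Equiv.swap h0 v0 h0 = v0 := Equiv.swap_apply_left _ _
  have s01 : Equiv.swap h0 v0 v0 = h0 := Equiv.swap_apply_right _ _
  have s10 : Equiv.swap h1 v1 h1 = v1 := Equiv.swap_apply_left _ _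
  have s11 : Equiv.swap h1 v1 v1 = h1 := Equiv.swap_apply_right _ _
  have s0h1 : Equiv.swap h0 v0 h1 = h1 :=
    Equiv.swap_apply_of_ne_of_ne (Ne.symm hne0h1) (Ne.symm hnev0h1)
  have s0v1 : Equiv.swap h0 v0 v1 = v1 :=
    Equiv.swap_apply_of_ne_of_ne (Ne.symm hne0v1) (Ne.symm hnev0v1)
  have s1h0 : Equiv.swap h1 v1 h0 = h0 := Equiv.swap_apply_of_ne_of_ne hne0h1 hne0v1
  have s1v0 : Equiv.swap h1 v1 v0 = v0 := Equiv.swap_apply_of_ne_of_ne hnev0h1 hnev0v1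
  have c0 : (Equiv.swap h0 v0 * Equiv.swap h1 v1) h0 = v0 := by
    rw [Equiv.Perm.mul_apply, s1h0, s00]
  have c1 : (Equiv.swap h0 v0 * Equiv.swap h1 v1) v0 = h0 := by
    rw [Equiv.Perm.mul_apply, s1v0, s01]
  have c2 : (Equiv.swap h0 v0 * Equiv.swap h1 v1) h1 = v1 := by
    rw [Equiv.Perm.mul_apply, s10, s0v1]
  have c3 : (Equiv.swap h0 v0 * Equiv.swap h1 v1) v1 = h1 := by
    rw [Equiv.Perm.mul_apply, s11, s0h1]
  have swinv : ∀ z w : Fin N, (Equiv.swap h0 v0 * Equiv.swap h1 v1) z = w →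
      z = (Equiv.swap h0 v0 * Equiv.swap h1 v1) w := by
    intro z w h
    rw [← h]
    have := congrFun (congrArg (fun (g : Equiv.Perm (Fin N)) => (g : Fin N → Fin N)) hsq) z
    simp only [Equiv.Perm.coe_mul, Function.comp_apply, Equiv.Perm.coe_one, id_eq] at this
    simp only [Equiv.Perm.mul_apply]
    exact this.symm
  unfold winv
  apply filterCardEquiv _ _
    ((Equiv.prodCongr (Equiv.swap h0 v0 * Equiv.swap h1 v1)
        (Equiv.swap h0 v0 * Equiv.swap h1 v1)).trans
      ((Equiv.swap ((h0, v1) : Fin N × Fin N) ((h1, v1) : Fin N × Fin N)).trans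
        (Equiv.swap ((v0, h0) : Fin N × Fin N) ((v0, h1) : Fin N × Fin N))))
  rintro ⟨x, y⟩
  simp only [Equiv.trans_apply, prodCongr_pair]
  by_cases hA : x = h0 ∧ y = v0
  · obtain ⟨rfl, rfl⟩ := hA
    rw [c0, c1]
    rw [Equiv.swap_apply_of_ne_of_ne (pair_ne_fst _ _ (Ne.symm hne01))
      (pair_ne_fst _ _ hnev0h1), Equiv.swap_apply_left]
    simp only [Equiv.Perm.mul_apply, s1v0, s01, s1h0, s00]
    constructor
    · rintro -; exact ⟨by omega, by omega, hbe⟩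
    · rintro -; exact ⟨by omega, by omega, habe⟩
  by_cases hB : x = v0 ∧ y = h0
  · obtain ⟨rfl, rfl⟩ := hB
    rw [c0, c1]
    rw [Equiv.swap_apply_of_ne_of_ne (pair_ne_snd _ _ hnev0v1) (pair_ne_fst _ _ hne0h1),
      Equiv.swap_apply_of_ne_of_ne (pair_ne_fst _ _ hne01) (pair_ne_fst _ _ hne01)]
    simp only [Equiv.Perm.mul_apply, s1v0, s01, s1h0, s00]
    constructor
    · rintro ⟨u1, -, -⟩; exact absurd u1 (by omega)
    · rintro ⟨-, -, u3⟩; exact absurd u3 (not_lt.mpr habe.le)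
  by_cases hC : x = h0 ∧ y = v1
  · obtain ⟨rfl, rfl⟩ := hC
    rw [c0, c3]
    rw [Equiv.swap_apply_of_ne_of_ne (pair_ne_fst _ _ (Ne.symm hne01))
      (pair_ne_fst _ _ hnev0h1), Equiv.swap_apply_right]
    simp only [Equiv.Perm.mul_apply]
    constructor
    · rintro ⟨-, u2, -⟩; exact absurd u2 (by omega)
    · rintro ⟨u1, -, -⟩; exact absurd u1 (by omega)
  by_cases hD : x = v0 ∧ y = h1
  · obtain ⟨rfl, rfl⟩ := hD
    rw [c1, c2, Equiv.swap_apply_left]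
    rw [Equiv.swap_apply_of_ne_of_ne (pair_ne_fst _ _ (Ne.symm hnev0h1))
      (pair_ne_fst _ _ (Ne.symm hnev0h1))]
    simp only [Equiv.Perm.mul_apply, s10, s0v1, s1v0, s01]
    constructor
    · rintro -; exact ⟨by omega, by omega, hcab⟩
    · rintro -; exact ⟨by omega, by omega, hca⟩
  by_cases hE : x = h1 ∧ y = v1
  · obtain ⟨rfl, rfl⟩ := hE
    rw [c2, c3]
    rw [Equiv.swap_apply_of_ne_of_ne (pair_ne_fst _ _ (Ne.symm hne0v1))
      (pair_ne_fst _ _ (Ne.symm hneh1v1)),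
      Equiv.swap_apply_of_ne_of_ne (pair_ne_fst _ _ (Ne.symm hnev0v1))
      (pair_ne_fst _ _ (Ne.symm hnev0v1))]
    simp only [Equiv.Perm.mul_apply, s11, s0h1, s10, s0v1]
    constructor
    · rintro ⟨-, -, u3⟩; exact absurd u3 (not_lt.mpr hcab.le)
    · rintro ⟨u1, -, -⟩; exact absurd u1 (by omega)
  by_cases hF : x = v1 ∧ y = h1
  · obtain ⟨rfl, rfl⟩ := hF
    rw [c2, c3, Equiv.swap_apply_right]
    rw [Equiv.swap_apply_of_ne_of_ne (pair_ne_fst _ _ hne01) (pair_ne_fst _ _ hne01)]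
    simp only [Equiv.Perm.mul_apply]
    constructor
    · rintro ⟨u1, -, -⟩; exact absurd u1 (by omega)
    · rintro ⟨-, u2, -⟩; exact absurd u2 (by omega)
  have nb1 : (((Equiv.swap h0 v0 * Equiv.swap h1 v1) x,
      (Equiv.swap h0 v0 * Equiv.swap h1 v1) y) : Fin N × Fin N) ≠ (h0, v1) := by
    intro h; rw [Prod.mk.injEq] at h
    exact hD ⟨by rw [swinv x h0 h.1, c0], by rw [swinv y v1 h.2, c3]⟩
  have nb2 : (((Equiv.swap h0 v0 * Equiv.swap h1 v1) x,
      (Equiv.swap h0 v0 * Equiv.swap h1 v1) y) : Fin N × Fin N) ≠ (h1, v1) := by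
    intro h; rw [Prod.mk.injEq] at h
    exact hF ⟨by rw [swinv x h1 h.1, c2], by rw [swinv y v1 h.2, c3]⟩
  have na1 : (((Equiv.swap h0 v0 * Equiv.swap h1 v1) x,
      (Equiv.swap h0 v0 * Equiv.swap h1 v1) y) : Fin N × Fin N) ≠ (v0, h0) := by
    intro h; rw [Prod.mk.injEq] at h
    exact hA ⟨by rw [swinv x v0 h.1, c1], by rw [swinv y h0 h.2, c0]⟩
  have na2 : (((Equiv.swap h0 v0 * Equiv.swap h1 v1) x,
      (Equiv.swap h0 v0 * Equiv.swap h1 v1) y) : Fin N × Fin N) ≠ (v0, h1) := by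
    intro h; rw [Prod.mk.injEq] at h
    exact hC ⟨by rw [swinv x v0 h.1, c1], by rw [swinv y h1 h.2, c2]⟩
  rw [Equiv.swap_apply_of_ne_of_ne nb1 nb2, Equiv.swap_apply_of_ne_of_ne na1 na2]
  have hw := hwin x y hA hB hC hD hE hF
  simp only [Equiv.Perm.mul_apply]
  constructor
  · rintro ⟨u1, u2, u3⟩; exact ⟨(hw.mp ⟨u1, u2⟩).1, (hw.mp ⟨u1, u2⟩).2, u3⟩
  · rintro ⟨u1, u2, u3⟩; exact ⟨(hw.mpr ⟨u1, u2⟩).1, (hw.mpr ⟨u1, u2⟩).2, u3⟩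

end Aux15

namespace Aux15
variable {N d i : ℕ} {sh : Fin N → ℕ} {h0 h1 v0 v1 : Fin N}

lemma desA (H : Hgeo15 d i sh h0 h1 v0 v1) (T : Equiv.Perm (Fin N))
    (hgap : ((T h0 : Fin N) : ℕ) ≠ ((T v0 : Fin N) : ℕ) + 1 ∧
      ((T v0 : Fin N) : ℕ) ≠ ((T h0 : Fin N) : ℕ) + 1) :
    wdes (fun x => sh ((Equiv.swap h0 v0 * Equiv.swap h1 v1) x)) (T * Equiv.swap h1 v1)
      = wdes sh T := by
  have hord := ordA H
  obtain ⟨hd2, hi, hinj, hh0, hh1, hv0, hv1, hexcl⟩ := H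
  unfold wdes
  apply Finset.filter_congr
  intro k hk
  rw [Finset.mem_Ico] at hk
  have hkN : k < N := hk.2
  have hk1N : k - 1 < N := by omega
  have hred : ∀ (m : ℕ) (hm : m < N),
      wepos (fun x => sh ((Equiv.swap h0 v0 * Equiv.swap h1 v1) x)) (T * Equiv.swap h1 v1) m
        = wpos sh (Equiv.swap h0 v0 (T⁻¹ ⟨m, hm⟩)) := by
    intro m hm
    rw [wepos, dif_pos hm, wpos_comp_s15]
    congr 1
    rw [mul_inv_rev, Equiv.swap_inv, Equiv.Perm.mul_apply, Equiv.Perm.mul_apply,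
      Equiv.swap_apply_self]
  have ex1 : ¬(T⁻¹ ⟨k, hkN⟩ = h0 ∧ T⁻¹ ⟨k - 1, hk1N⟩ = v0) := by
    rintro ⟨hx, hy⟩
    have e1 : T h0 = ⟨k, hkN⟩ := by rw [← hx]; exact T.apply_symm_apply _
    have e2 : T v0 = ⟨k - 1, hk1N⟩ := by rw [← hy]; exact T.apply_symm_apply _
    rw [e1, e2] at hgap
    simp only [Fin.val_mk] at hgap
    omega
  have ex2 : ¬(T⁻¹ ⟨k, hkN⟩ = v0 ∧ T⁻¹ ⟨k - 1, hk1N⟩ = h0) := by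
    rintro ⟨hx, hy⟩
    have e1 : T v0 = ⟨k, hkN⟩ := by rw [← hx]; exact T.apply_symm_apply _
    have e2 : T h0 = ⟨k - 1, hk1N⟩ := by rw [← hy]; exact T.apply_symm_apply _
    rw [e1, e2] at hgap
    simp only [Fin.val_mk] at hgap
    omega
  rw [hred k hkN, hred (k-1) hk1N, wepos, wepos, dif_pos hkN, dif_pos hk1N,
    wpos_lt_iff sh hinj, wpos_lt_iff sh hinj]
  exact hord _ _ ex1 ex2


lemma desB (H : Hgeo15 d i sh h0 h1 v0 v1) (T : Equiv.Perm (Fin N))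
    (hgap : ((T h1 : Fin N) : ℕ) ≠ ((T v1 : Fin N) : ℕ) + 1 ∧
      ((T v1 : Fin N) : ℕ) ≠ ((T h1 : Fin N) : ℕ) + 1) :
    wdes (fun x => sh ((Equiv.swap h0 v0 * Equiv.swap h1 v1) x)) (T * Equiv.swap h0 v0)
      = wdes sh T := by
  have hord := ordB H
  have hcomm := swaps_comm H
  obtain ⟨hd2, hi, hinj, hh0, hh1, hv0, hv1, hexcl⟩ := H
  unfold wdes
  apply Finset.filter_congr
  intro k hk
  rw [Finset.mem_Ico] at hk
  have hkN : k < N := hk.2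
  have hk1N : k - 1 < N := by omega
  have hred : ∀ (m : ℕ) (hm : m < N),
      wepos (fun x => sh ((Equiv.swap h0 v0 * Equiv.swap h1 v1) x)) (T * Equiv.swap h0 v0) m
        = wpos sh (Equiv.swap h1 v1 (T⁻¹ ⟨m, hm⟩)) := by
    intro m hm
    rw [wepos, dif_pos hm, wpos_comp_s15]
    congr 1
    rw [mul_inv_rev, Equiv.swap_inv, Equiv.Perm.mul_apply, Equiv.Perm.mul_apply,
      hcomm (T⁻¹ ⟨m, hm⟩), Equiv.swap_apply_self]
  have ex1 : ¬(T⁻¹ ⟨k, hkN⟩ = h1 ∧ T⁻¹ ⟨k - 1, hk1N⟩ = v1) := by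
    rintro ⟨hx, hy⟩
    have e1 : T h1 = ⟨k, hkN⟩ := by rw [← hx]; exact T.apply_symm_apply _
    have e2 : T v1 = ⟨k - 1, hk1N⟩ := by rw [← hy]; exact T.apply_symm_apply _
    rw [e1, e2] at hgap
    simp only [Fin.val_mk] at hgap
    omega
  have ex2 : ¬(T⁻¹ ⟨k, hkN⟩ = v1 ∧ T⁻¹ ⟨k - 1, hk1N⟩ = h1) := by
    rintro ⟨hx, hy⟩
    have e1 : T v1 = ⟨k, hkN⟩ := by rw [← hx]; exact T.apply_symm_apply _
    have e2 : T h1 = ⟨k - 1, hk1N⟩ := by rw [← hy]; exact T.apply_symm_apply _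
    rw [e1, e2] at hgap
    simp only [Fin.val_mk] at hgap
    omega
  rw [hred k hkN, hred (k-1) hk1N, wepos, wepos, dif_pos hkN, dif_pos hk1N,
    wpos_lt_iff sh hinj, wpos_lt_iff sh hinj]
  exact hord _ _ ex1 ex2

lemma desC (H : Hgeo15 d i sh h0 h1 v0 v1) (T : Equiv.Perm (Fin N))
    (hgap0 : ((T h0 : Fin N) : ℕ) ≠ ((T v0 : Fin N) : ℕ) + 1 ∧
      ((T v0 : Fin N) : ℕ) ≠ ((T h0 : Fin N) : ℕ) + 1)
    (hgap1 : ((T h1 : Fin N) : ℕ) ≠ ((T v1 : Fin N) : ℕ) + 1 ∧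
      ((T v1 : Fin N) : ℕ) ≠ ((T h1 : Fin N) : ℕ) + 1) :
    wdes (fun x => sh ((Equiv.swap h0 v0 * Equiv.swap h1 v1) x)) T = wdes sh T := by
  have hord := ordC H
  obtain ⟨hd2, hi, hinj, hh0, hh1, hv0, hv1, hexcl⟩ := H
  unfold wdes
  apply Finset.filter_congr
  intro k hk
  rw [Finset.mem_Ico] at hk
  have hkN : k < N := hk.2
  have hk1N : k - 1 < N := by omega
  have hred : ∀ (m : ℕ) (hm : m < N),
      wepos (fun x => sh ((Equiv.swap h0 v0 * Equiv.swap h1 v1) x)) T m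
        = wpos sh ((Equiv.swap h0 v0 * Equiv.swap h1 v1) (T⁻¹ ⟨m, hm⟩)) := by
    intro m hm
    rw [wepos, dif_pos hm, wpos_comp_s15]
  have ex1 : ¬(T⁻¹ ⟨k, hkN⟩ = h0 ∧ T⁻¹ ⟨k - 1, hk1N⟩ = v0) := by
    rintro ⟨hx, hy⟩
    have e1 : T h0 = ⟨k, hkN⟩ := by rw [← hx]; exact T.apply_symm_apply _
    have e2 : T v0 = ⟨k - 1, hk1N⟩ := by rw [← hy]; exact T.apply_symm_apply _
    rw [e1, e2] at hgap0
    simp only [Fin.val_mk] at hgap0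
    omega
  have ex2 : ¬(T⁻¹ ⟨k, hkN⟩ = v0 ∧ T⁻¹ ⟨k - 1, hk1N⟩ = h0) := by
    rintro ⟨hx, hy⟩
    have e1 : T v0 = ⟨k, hkN⟩ := by rw [← hx]; exact T.apply_symm_apply _
    have e2 : T h0 = ⟨k - 1, hk1N⟩ := by rw [← hy]; exact T.apply_symm_apply _
    rw [e1, e2] at hgap0
    simp only [Fin.val_mk] at hgap0
    omega
  have ex3 : ¬(T⁻¹ ⟨k, hkN⟩ = h1 ∧ T⁻¹ ⟨k - 1, hk1N⟩ = v1) := by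
    rintro ⟨hx, hy⟩
    have e1 : T h1 = ⟨k, hkN⟩ := by rw [← hx]; exact T.apply_symm_apply _
    have e2 : T v1 = ⟨k - 1, hk1N⟩ := by rw [← hy]; exact T.apply_symm_apply _
    rw [e1, e2] at hgap1
    simp only [Fin.val_mk] at hgap1
    omega
  have ex4 : ¬(T⁻¹ ⟨k, hkN⟩ = v1 ∧ T⁻¹ ⟨k - 1, hk1N⟩ = h1) := by
    rintro ⟨hx, hy⟩
    have e1 : T v1 = ⟨k, hkN⟩ := by rw [← hx]; exact T.apply_symm_apply _
    have e2 : T h1 = ⟨k - 1, hk1N⟩ := by rw [← hy]; exact T.apply_symm_apply _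
    rw [e1, e2] at hgap1
    simp only [Fin.val_mk] at hgap1
    omega
  rw [hred k hkN, hred (k-1) hk1N, wepos, wepos, dif_pos hkN, dif_pos hk1N,
    wpos_lt_iff sh hinj, wpos_lt_iff sh hinj]
  exact hord _ _ ex1 ex2 ex3 ex4

end Aux15

/-- Lemma 5.5: in a `d`-tuple of skew shapes where shape `i` is a
horizontal domino with content set `{0,1}` (cells `h0, h1` of shifted contents
`i, d+i`) and shape `i+1` is a vertical domino with content set `{0,1}` (cells
`v0, v1` of shifted contents `i+1, d+i+1`), with all remaining cells carrying
shifted contents not congruent to `i` or `i+1` mod `d` and the standardness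
constraints `P` of the other shapes not involving the four domino cells,
swapping the two dominoes (i.e. replacing `sh` by `sh'` which interchanges the
shifted contents of the two dominoes) admits a bijection `Ψ` on standard
fillings preserving the inversion number, the entries outside the two dominoes,
and the set of entries on content-0 cells; consequently the two generating
functions `∑ q^{inv_d} t_{Des}` coincide. -/
theorem stmt15 (N d : ℕ) (hd : 2 ≤ d) (i : ℕ) (hi : i + 1 < d)
    (sh : Fin N → ℕ) (hinj : Function.Injective sh)
    (h0 h1 v0 v1 : Fin N)
    (hh0 : sh h0 = i) (hh1 : sh h1 = d + i)
    (hv0 : sh v0 = i + 1) (hv1 : sh v1 = d + i + 1)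
    (hother : ∀ x : Fin N, x ≠ h0 → x ≠ h1 → x ≠ v0 → x ≠ v1 →
      sh x % d ≠ i ∧ sh x % d ≠ i + 1)
    (P : Finset (Fin N × Fin N))
    (hP : ∀ p ∈ P, (p.1 ≠ h0 ∧ p.1 ≠ h1 ∧ p.1 ≠ v0 ∧ p.1 ≠ v1) ∧
      (p.2 ≠ h0 ∧ p.2 ≠ h1 ∧ p.2 ≠ v0 ∧ p.2 ≠ v1)) :
    ∃ Ψ : Equiv.Perm (Fin N) → Equiv.Perm (Fin N),
      Set.BijOn Ψ
        {T | (∀ p ∈ P, T p.1 < T p.2) ∧ T h0 < T h1 ∧ T v1 < T v0}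
        {T | (∀ p ∈ P, T p.1 < T p.2) ∧ T h0 < T h1 ∧ T v1 < T v0} ∧
      (∀ T ∈ ({T | (∀ p ∈ P, T p.1 < T p.2) ∧ T h0 < T h1 ∧ T v1 < T v0} :
          Set (Equiv.Perm (Fin N))),
        winv d (fun x => if x = h0 then i + 1 else if x = h1 then d + i + 1
            else if x = v0 then i else if x = v1 then d + i else sh x) (Ψ T)
          = winv d sh T ∧
        (∀ x : Fin N, x ≠ h0 → x ≠ h1 → x ≠ v0 → x ≠ v1 → Ψ T x = T x) ∧
        ({Ψ T h0, Ψ T v0} : Finset (Fin N)) = {T h0, T v0}) ∧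
      wGF d sh {T | (∀ p ∈ P, T p.1 < T p.2) ∧ T h0 < T h1 ∧ T v1 < T v0}
        = wGF d (fun x => if x = h0 then i + 1 else if x = h1 then d + i + 1
            else if x = v0 then i else if x = v1 then d + i else sh x)
            {T | (∀ p ∈ P, T p.1 < T p.2) ∧ T h0 < T h1 ∧ T v1 < T v0} := by
  classical
  set S : Set (Equiv.Perm (Fin N)) :=
    {T | (∀ p ∈ P, T p.1 < T p.2) ∧ T h0 < T h1 ∧ T v1 < T v0} with hSdef
  set sh' : Fin N → ℕ := fun x => if x = h0 then i + 1 else if x = h1 then d + i + 1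
      else if x = v0 then i else if x = v1 then d + i else sh x with hsh'def
  have hexcl6 : ∀ z : Fin N, z ≠ h0 → z ≠ h1 → z ≠ v0 → z ≠ v1 →
      sh z ≠ i ∧ sh z ≠ i + 1 ∧ sh z ≠ d + i ∧ sh z ≠ d + i + 1 ∧
      sh z ≠ 2*d + i ∧ sh z ≠ 2*d + i + 1 := by
    intro z hz0 hz1 hz2 hz3
    obtain ⟨m1, m2⟩ := hother z hz0 hz1 hz2 hz3
    have hidm : i % d = i := Nat.mod_eq_of_lt (by omega)
    have hid1m : (i + 1) % d = i + 1 := Nat.mod_eq_of_lt (by omega)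
    refine ⟨fun h => m1 (by rw [h, hidm]), fun h => m2 (by rw [h, hid1m]), ?_, ?_, ?_, ?_⟩
    · intro h; apply m1; rw [h, Nat.add_mod_left, hidm]
    · intro h; apply m2; rw [h, Nat.add_assoc, Nat.add_mod_left, hid1m]
    · intro h; apply m1
      rw [h, show 2*d + i = d + (d + i) by ring, Nat.add_mod_left, Nat.add_mod_left, hidm]
    · intro h; apply m2
      rw [h, show 2*d + i + 1 = d + (d + (i + 1)) by ring, Nat.add_mod_left,
        Nat.add_mod_left, hid1m]
  have H : Hgeo15 d i sh h0 h1 v0 v1 := ⟨hd, hi, hinj, hh0, hh1, hv0, hv1, hexcl6⟩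
  obtain ⟨hne01, hne0h1, hne0v1, hnev0h1, hnev0v1, hneh1v1⟩ := Aux15.cells_ne H
  have w00 : Equiv.swap h0 v0 h0 = v0 := Equiv.swap_apply_left _ _
  have w01 : Equiv.swap h0 v0 v0 = h0 := Equiv.swap_apply_right _ _
  have w10 : Equiv.swap h1 v1 h1 = v1 := Equiv.swap_apply_left _ _
  have w11 : Equiv.swap h1 v1 v1 = h1 := Equiv.swap_apply_right _ _
  have w0h1 : Equiv.swap h0 v0 h1 = h1 :=
    Equiv.swap_apply_of_ne_of_ne (Ne.symm hne0h1) (Ne.symm hnev0h1)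
  have w0v1 : Equiv.swap h0 v0 v1 = v1 :=
    Equiv.swap_apply_of_ne_of_ne (Ne.symm hne0v1) (Ne.symm hnev0v1)
  have w1h0 : Equiv.swap h1 v1 h0 = h0 := Equiv.swap_apply_of_ne_of_ne hne0h1 hne0v1
  have w1v0 : Equiv.swap h1 v1 v0 = v0 := Equiv.swap_apply_of_ne_of_ne hnev0h1 hnev0v1
  have c0 : (Equiv.swap h0 v0 * Equiv.swap h1 v1) h0 = v0 := by
    rw [Equiv.Perm.mul_apply, w1h0, w00]
  have c1 : (Equiv.swap h0 v0 * Equiv.swap h1 v1) v0 = h0 := by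
    rw [Equiv.Perm.mul_apply, w1v0, w01]
  have c2 : (Equiv.swap h0 v0 * Equiv.swap h1 v1) h1 = v1 := by
    rw [Equiv.Perm.mul_apply, w10, w0v1]
  have c3 : (Equiv.swap h0 v0 * Equiv.swap h1 v1) v1 = h1 := by
    rw [Equiv.Perm.mul_apply, w11, w0h1]
  have hsh'c : sh' = fun x => sh ((Equiv.swap h0 v0 * Equiv.swap h1 v1) x) := by
    funext x
    simp only [hsh'def]
    rcases eq_or_ne x h0 with rfl | hx0
    · rw [if_pos rfl, c0, hv0]
    rcases eq_or_ne x h1 with rfl | hx1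
    · rw [if_neg (Ne.symm hne0h1), if_pos rfl, c2, hv1]
    rcases eq_or_ne x v0 with rfl | hx2
    · rw [if_neg (Ne.symm hne01), if_neg hnev0h1, if_pos rfl, c1, hh0]
    rcases eq_or_ne x v1 with rfl | hx3
    · rw [if_neg (Ne.symm hne0v1), if_neg (Ne.symm hneh1v1), if_neg (Ne.symm hnev0v1),
        if_pos rfl, c3, hh1]
    · rw [if_neg hx0, if_neg hx1, if_neg hx2, if_neg hx3, Equiv.Perm.mul_apply,
        Equiv.swap_apply_of_ne_of_ne hx1 hx3, Equiv.swap_apply_of_ne_of_ne hx0 hx2]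
  have hsq := Aux15.tau01_sq H
  have hτinv : (Equiv.swap h0 v0 * Equiv.swap h1 v1)⁻¹
      = Equiv.swap h0 v0 * Equiv.swap h1 v1 := inv_eq_of_mul_eq_one_right hsq
  have hprod1 : Equiv.swap h1 v1 * (Equiv.swap h0 v0 * Equiv.swap h1 v1)
      = Equiv.swap h0 v0 := by
    apply Equiv.ext; intro w
    simp only [Equiv.Perm.mul_apply]
    rw [Aux15.swaps_comm H (Equiv.swap h1 v1 w), Equiv.swap_apply_self]
  have hprod0 : Equiv.swap h0 v0 * (Equiv.swap h0 v0 * Equiv.swap h1 v1)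
      = Equiv.swap h1 v1 := by
    rw [← mul_assoc, Equiv.swap_mul_self, one_mul]
  set sig : Equiv.Perm (Fin N) → Equiv.Perm (Fin N) := fun T =>
    if T h0 < T v1 ∧ T h1 < T v0 then Equiv.swap h1 v1
    else if T v1 < T h0 ∧ T v0 < T h1 then Equiv.swap h0 v0
    else 1 with hsigdef
  set Ψ : Equiv.Perm (Fin N) → Equiv.Perm (Fin N) :=
    fun T => if T ∈ S then T * sig T else T with hΨdef
  have master : ∀ T, T ∈ S → (T * sig T) ∈ S ∧ sig (T * sig T) = sig T ∧
      winv d sh' (T * sig T) = winv d sh T ∧ wdes sh' (T * sig T) = wdes sh T ∧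
      (∀ x : Fin N, x ≠ h0 → x ≠ h1 → x ≠ v0 → x ≠ v1 → (T * sig T) x = T x) ∧
      ({(T * sig T) h0, (T * sig T) v0} : Finset (Fin N)) = {T h0, T v0} := by
    intro T hT
    have hT' : (∀ p ∈ P, T p.1 < T p.2) ∧ T h0 < T h1 ∧ T v1 < T v0 := hT
    obtain ⟨hTP, hab, hce⟩ := hT'
    by_cases hC1 : T h0 < T v1 ∧ T h1 < T v0
    · have hsig : sig T = Equiv.swap h1 v1 := by
        simp only [hsigdef]; rw [if_pos hC1]
      rw [hsig]
      refine ⟨?_, ?_, ?_, ?_, ?_, ?_⟩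
      · refine ⟨?_, ?_, ?_⟩
        · intro p hp
          obtain ⟨⟨q1, q2, q3, q4⟩, ⟨r1, r2, r3, r4⟩⟩ := hP p hp
          simp only [Equiv.Perm.mul_apply, Equiv.swap_apply_of_ne_of_ne q2 q4,
            Equiv.swap_apply_of_ne_of_ne r2 r4]
          exact hTP p hp
        · simp only [Equiv.Perm.mul_apply, w1h0, w10]
          exact hC1.1
        · simp only [Equiv.Perm.mul_apply, w11, w1v0]
          exact hC1.2
      · simp only [hsigdef, Equiv.Perm.mul_apply, w1h0, w11, w10, w1v0]
        rw [if_pos ⟨hab, hce⟩]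
      · rw [hsh'c, winv_comp_s15, hτinv, mul_assoc, hprod1]
        exact Aux15.invA H T hab hce hC1.1 hC1.2
      · rw [hsh'c]
        apply Aux15.desA H T
        have g1 := Fin.lt_def.mp hC1.1
        have g2 := Fin.lt_def.mp hce
        exact ⟨by omega, by omega⟩
      · intro x hx0 hx1 hx2 hx3
        simp only [Equiv.Perm.mul_apply, Equiv.swap_apply_of_ne_of_ne hx1 hx3]
      · simp only [Equiv.Perm.mul_apply, w1h0, w1v0]
    by_cases hC2 : T v1 < T h0 ∧ T v0 < T h1
    · have hsig : sig T = Equiv.swap h0 v0 := by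
        simp only [hsigdef]; rw [if_neg hC1, if_pos hC2]
      rw [hsig]
      refine ⟨?_, ?_, ?_, ?_, ?_, ?_⟩
      · refine ⟨?_, ?_, ?_⟩
        · intro p hp
          obtain ⟨⟨q1, q2, q3, q4⟩, ⟨r1, r2, r3, r4⟩⟩ := hP p hp
          simp only [Equiv.Perm.mul_apply, Equiv.swap_apply_of_ne_of_ne q1 q3,
            Equiv.swap_apply_of_ne_of_ne r1 r3]
          exact hTP p hp
        · simp only [Equiv.Perm.mul_apply, w00, w0h1]
          exact hC2.2
        · simp only [Equiv.Perm.mul_apply, w0v1, w01]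
          exact hC2.1
      · simp only [hsigdef, Equiv.Perm.mul_apply, w00, w01, w0h1, w0v1]
        rw [if_neg (fun hh => absurd hh.1 (not_lt.mpr hce.le)), if_pos ⟨hce, hab⟩]
      · rw [hsh'c, winv_comp_s15, hτinv, mul_assoc, hprod0]
        exact Aux15.invB H T hab hce hC2.1 hC2.2
      · rw [hsh'c]
        apply Aux15.desB H T
        have g1 := Fin.lt_def.mp hC2.1
        have g2 := Fin.lt_def.mp hab
        exact ⟨by omega, by omega⟩
      · intro x hx0 hx1 hx2 hx3
        simp only [Equiv.Perm.mul_apply, Equiv.swap_apply_of_ne_of_ne hx0 hx2]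
      · simp only [Equiv.Perm.mul_apply, w00, w01]
        exact Finset.pair_comm _ _
    · have hsig : sig T = 1 := by
        simp only [hsigdef]; rw [if_neg hC1, if_neg hC2]
      rw [hsig, mul_one]
      have hne_ac : T h0 ≠ T v1 := fun h => hne0v1 (T.injective h)
      have hne_eb : T v0 ≠ T h1 := fun h => hnev0h1 (T.injective h)
      refine ⟨hT, hsig, ?_, ?_, fun x _ _ _ _ => rfl, rfl⟩
      · rw [hsh'c, winv_comp_s15, hτinv]
        rcases hne_ac.lt_or_gt with hac | hca
        · have heb : T v0 < T h1 := by
            rcases hne_eb.lt_or_gt with h' | h'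
            · exact h'
            · exact absurd ⟨hac, h'⟩ hC1
          exact Aux15.invC1 H T hab hce hac heb
        · have hbe : T h1 < T v0 := by
            rcases hne_eb.lt_or_gt with h' | h'
            · exact absurd ⟨hca, h'⟩ hC2
            · exact h'
          exact Aux15.invC2 H T hab hce hca hbe
      · rw [hsh'c]
        apply Aux15.desC H T
        all_goals {
          rcases hne_ac.lt_or_gt with hac | hca
          · have heb : T v0 < T h1 := by
              rcases hne_eb.lt_or_gt with h' | h'
              · exact h'
              · exact absurd ⟨hac, h'⟩ hC1
            have g1 := Fin.lt_def.mp hac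
            have g2 := Fin.lt_def.mp hce
            have g3 := Fin.lt_def.mp heb
            have g4 := Fin.lt_def.mp hab
            exact ⟨by omega, by omega⟩
          · have hbe : T h1 < T v0 := by
              rcases hne_eb.lt_or_gt with h' | h'
              · exact absurd ⟨hca, h'⟩ hC2
              · exact h'
            have g1 := Fin.lt_def.mp hca
            have g2 := Fin.lt_def.mp hce
            have g3 := Fin.lt_def.mp hbe
            have g4 := Fin.lt_def.mp hab
            exact ⟨by omega, by omega⟩ }
  have hΨval : ∀ T ∈ S, Ψ T = T * sig T := by
    intro T hT; simp only [hΨdef]; rw [if_pos hT]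
  have hΨmem : ∀ T ∈ S, Ψ T ∈ S := by
    intro T hT; rw [hΨval T hT]; exact (master T hT).1
  have hsigsq : ∀ T, sig T * sig T = 1 := by
    intro T
    simp only [hsigdef]
    split_ifs
    · exact Equiv.swap_mul_self _ _
    · exact Equiv.swap_mul_self _ _
    · exact one_mul 1
  have hinvol : ∀ T, Ψ (Ψ T) = T := by
    intro T
    by_cases hT : T ∈ S
    · rw [hΨval T hT, hΨval _ ((hΨval T hT) ▸ hΨmem T hT), (master T hT).2.1,
        mul_assoc, hsigsq, mul_one]
    · have hfix : Ψ T = T := by simp only [hΨdef]; rw [if_neg hT]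
      rw [hfix, hfix]
  refine ⟨Ψ, ⟨hΨmem, ?_, ?_⟩, ?_, ?_⟩
  · intro a _ b _ hEq
    have := congrArg Ψ hEq
    rwa [hinvol, hinvol] at this
  · intro y hy
    exact ⟨Ψ y, hΨmem y hy, hinvol y⟩
  · intro T hT
    rw [hΨval T hT]
    exact ⟨(master T hT).2.2.1, (master T hT).2.2.2.2.1, (master T hT).2.2.2.2.2⟩
  · have hbij : Function.Bijective Ψ := Function.Involutive.bijective hinvol
    unfold wGF
    calc (∑ T : Equiv.Perm (Fin N), S.indicator (fun T => Finsupp.single (wdes sh T)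
          ((Polynomial.X : Polynomial ℤ) ^ winv d sh T)) T)
        = ∑ T : Equiv.Perm (Fin N), S.indicator (fun T => Finsupp.single (wdes sh' T)
            ((Polynomial.X : Polynomial ℤ) ^ winv d sh' T)) (Ψ T) := by
          apply Finset.sum_congr rfl
          intro T _
          by_cases hT : T ∈ S
          · rw [Set.indicator_of_mem hT, Set.indicator_of_mem (hΨmem T hT)]
            rw [hΨval T hT, (master T hT).2.2.1, (master T hT).2.2.2.1]
          · have hfix : Ψ T = T := by simp only [hΨdef]; rw [if_neg hT]
            rw [hfix, Set.indicator_of_notMem hT, Set.indicator_of_notMem hT]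
      _ = ∑ T : Equiv.Perm (Fin N), S.indicator (fun T => Finsupp.single (wdes sh' T)
            ((Polynomial.X : Polynomial ℤ) ^ winv d sh' T)) T :=
          Function.Bijective.sum_comp hbij _
end
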